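/- arXiv:1705.02158 — 8 statements merged into one kernel-verified Lean document; each statement's English description precedes it below -/
import Mathlib

section
/- For the weight-k action of the monoid Σ_0(p) on the Tate algebra T given by (σ ·_k f)(x) = det(σ)^{-k/2}(-cx+a)^k f((dx-b)/(-cx+a)) for σ = [[a,b],[c,d]], the image σ ·_k f is again an element of the Tate algebra, i.e. a power series in Q_p[[x]] whose coefficients tend to 0; in particular the function (dx-b)/(-cx+a) maps Z_p into Z_p and the series substitution converges. -/
/-!
Since `‖c / a‖ < 1`, the Möbius map is itself a Tate series with integral coefficients,
`u = a⁻¹ (dX - b) ∑ (c/a)ⁿ Xⁿ`. Series with coefficients in the unit ball tending to zero form a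
ring on which evaluation at points of the unit ball is a ring homomorphism, so
`Vₙ = (-cX + a)ᵏ uⁿ` is such a series and evaluates to `(-cx + a)ᵏ u(x)ⁿ`. As `fₙ → 0` and all
coefficients of all `Vₙ` lie in the unit ball, the double family `fₙ · coeffₘ Vₙ` tends to zero
along the cofinite filter of `ℕ × ℕ`; in an ultrametric field this makes `∑ₙ fₙ Vₙ` converge
coefficientwise to a series whose coefficients tend to zero, and lets the summations be swapped.
-/

open Filter Topology PowerSeries

section

variable {ι κ K : Type*} [NormedField K]

lemma tendsto_mul_cofinite_of_norm_le_one {f A : ι → K} (hf : Tendsto f cofinite (𝓝 0))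
    (hA : ∀ i, ‖A i‖ ≤ 1) : Tendsto (fun i => f i * A i) cofinite (𝓝 0) :=
  squeeze_zero_norm
    (fun i => by rw [norm_mul]; exact mul_le_of_le_one_right (norm_nonneg _) (hA i))
    (tendsto_zero_iff_norm_tendsto_zero.mp hf)

lemma tendsto_cofinite_prod_mul {f : ι → K} {A : ι → κ → K} (hf : Tendsto f cofinite (𝓝 0))
    (hA : ∀ i j, ‖A i j‖ ≤ 1) (hA0 : ∀ i, Tendsto (A i) cofinite (𝓝 0)) :
    Tendsto (fun z : ι × κ => f z.1 * A z.1 z.2) cofinite (𝓝 0) := by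
  have hrow (i : ι) : Tendsto (fun j => f i * A i j) cofinite (𝓝 0) := by
    simpa using (hA0 i).const_mul (f i)
  simp only [Metric.nhds_basis_closedBall.tendsto_right_iff, eventually_cofinite,
    Metric.mem_closedBall, dist_zero_right, not_le] at hf hrow ⊢
  intro ε hε
  refine ((hf ε hε).biUnion fun i _ => (hrow i ε hε).image (Prod.mk i)).subset ?_
  rintro ⟨i, j⟩ (hij : ε < ‖f i * A i j‖)
  have hi : ε < ‖f i‖ :=
    hij.trans_le (by rw [norm_mul]; exact mul_le_of_le_one_right (norm_nonneg _) (hA i j))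
  exact Set.mem_biUnion hi ⟨j, hij, rfl⟩

lemma tendsto_tsum_of_tendsto_cofinite_prod {M : Type*} [NormedAddCommGroup M]
    [IsUltrametricDist M] {a : ι × κ → M} (ha : Tendsto a cofinite (𝓝 0)) :
    Tendsto (fun j => ∑' i, a (i, j)) cofinite (𝓝 0) := by
  simp only [Metric.nhds_basis_closedBall.tendsto_right_iff, eventually_cofinite,
    Metric.mem_closedBall, dist_zero_right, not_le] at ha ⊢
  intro ε hε
  refine ((ha ε hε).image Prod.snd).subset fun j (hj : ε < ‖∑' i, a (i, j)‖) => ?_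
  by_contra hj'
  refine hj.not_ge (IsUltrametricDist.norm_tsum_le_of_forall_le_of_nonneg hε.le fun i => ?_)
  by_contra h
  exact hj' ⟨(i, j), not_le.mp h, rfl⟩

end

noncomputable section

namespace PowerSeries

variable {K : Type*} [NormedField K] [IsUltrametricDist K]

variable (K) in
/-- The unit ball `T°` of the Tate algebra `K⟨X⟩`: `IsRestricted 1 F` says that the coefficients
of `F` tend to zero. -/
def integralTate : Subring K⟦X⟧ where
  carrier := {F | IsRestricted 1 F ∧ ∀ n, ‖coeff n F‖ ≤ 1}
  mul_mem' {F G} hF hG := by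
    refine ⟨isRestricted.mul 1 hF.1 hG.1, fun n => ?_⟩
    rw [coeff_mul]
    refine IsUltrametricDist.norm_sum_le_of_forall_le_of_nonneg zero_le_one fun ij _ => ?_
    rw [norm_mul]
    exact mul_le_one₀ (hF.2 _) (norm_nonneg _) (hG.2 _)
  one_mem' := ⟨isRestricted_one 1, fun n => by rw [coeff_one]; split_ifs <;> simp⟩
  add_mem' {F G} hF hG := ⟨isRestricted.add 1 hF.1 hG.1, fun n => by
    rw [map_add]
    exact (IsUltrametricDist.norm_add_le_max _ _).trans (max_le (hF.2 n) (hG.2 n))⟩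
  zero_mem' := ⟨isRestricted_zero 1, by simp⟩
  neg_mem' {F} hF := ⟨isRestricted.neg 1 hF.1, by simpa using hF.2⟩

namespace integralTate

variable {F : K⟦X⟧} {x : K}

lemma norm_coeff_le_one (hF : F ∈ integralTate K) (n : ℕ) : ‖coeff n F‖ ≤ 1 := hF.2 n

lemma tendsto_coeff (hF : F ∈ integralTate K) :
    Tendsto (fun n => coeff n F) cofinite (𝓝 0) := by
  simpa [tendsto_zero_iff_norm_tendsto_zero, isRestricted_iff] using hF.1

def C (r : K) (hr : ‖r‖ ≤ 1) : integralTate K :=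
  ⟨PowerSeries.C r, isRestricted_C 1 r, fun n => by rw [coeff_C]; split_ifs <;> simp [hr]⟩

def X : integralTate K :=
  ⟨PowerSeries.X, isRestricted_monomial 1 1 1, fun n => by rw [coeff_X]; split_ifs <;> simp⟩

def geometric (q : K) (hq : ‖q‖ < 1) : integralTate K :=
  ⟨mk (q ^ ·), by
    simpa [isRestricted_iff'] using tendsto_pow_atTop_nhds_zero_of_lt_one (norm_nonneg q) hq,
    fun n => by simpa using pow_le_one₀ (norm_nonneg q) hq.le⟩

lemma norm_coeff_mul_pow_le_one (hF : F ∈ integralTate K) (hx : ‖x‖ ≤ 1) (n : ℕ) :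
    ‖coeff n F * x ^ n‖ ≤ 1 := by
  rw [norm_mul, norm_pow]
  exact mul_le_one₀ (norm_coeff_le_one hF n) (by positivity) (pow_le_one₀ (norm_nonneg x) hx)

variable {ι : Type*} {f : ι → K}

lemma tendsto_tsum_mul_coeff (hf : Tendsto f cofinite (𝓝 0)) (V : ι → integralTate K) :
    Tendsto (fun m => ∑' i, f i * coeff m (V i : K⟦X⟧)) cofinite (𝓝 0) :=
  tendsto_tsum_of_tendsto_cofinite_prod (a := fun z : ι × ℕ => f z.1 * coeff z.2 (V z.1 : K⟦X⟧))
    (tendsto_cofinite_prod_mul hf (fun i => norm_coeff_le_one (V i).2)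
      fun i => tendsto_coeff (V i).2)

variable [CompleteSpace K]

lemma summable_coeff_mul_pow (hF : F ∈ integralTate K) (hx : ‖x‖ ≤ 1) :
    Summable fun n => coeff n F * x ^ n :=
  NonarchimedeanAddGroup.summable_of_tendsto_cofinite_zero <|
    tendsto_mul_cofinite_of_norm_le_one (tendsto_coeff hF) fun n => by
      simpa using pow_le_one₀ (norm_nonneg x) hx

lemma tsum_coeff_mul_mul_pow {G : K⟦X⟧} (hF : F ∈ integralTate K) (hG : G ∈ integralTate K)
    (hx : ‖x‖ ≤ 1) :
    ∑' n, coeff n (F * G) * x ^ n = (∑' n, coeff n F * x ^ n) * ∑' n, coeff n G * x ^ n := by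
  have hFs := summable_coeff_mul_pow hF hx
  have hGs := summable_coeff_mul_pow hG hx
  have hFGs := NonarchimedeanAddGroup.summable_of_tendsto_cofinite_zero
    (tendsto_mul_cofinite_nhds_zero hFs.tendsto_cofinite_zero hGs.tendsto_cofinite_zero)
  rw [hFs.tsum_mul_tsum_eq_tsum_sum_antidiagonal hGs hFGs]
  refine tsum_congr fun n => ?_
  rw [coeff_mul, Finset.sum_mul]
  refine Finset.sum_congr rfl fun ij hij => ?_
  rw [← Finset.HasAntidiagonal.mem_antidiagonal.mp hij, pow_add]
  ring

def eval (hx : ‖x‖ ≤ 1) : integralTate K →+* K where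
  toFun F := ∑' n, coeff n (F : K⟦X⟧) * x ^ n
  map_one' := by
    rw [tsum_eq_single 0 fun n hn => by simp [coeff_one, hn]]
    simp
  map_mul' F G := tsum_coeff_mul_mul_pow F.2 G.2 hx
  map_zero' := by simp
  map_add' F G := by
    simp only [Subring.coe_add, map_add, add_mul]
    exact (summable_coeff_mul_pow F.2 hx).tsum_add (summable_coeff_mul_pow G.2 hx)

lemma eval_apply (hx : ‖x‖ ≤ 1) (F : integralTate K) :
    eval hx F = ∑' n, coeff n (F : K⟦X⟧) * x ^ n := rfl

lemma norm_eval_le_one (hx : ‖x‖ ≤ 1) (F : integralTate K) : ‖eval hx F‖ ≤ 1 :=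
  IsUltrametricDist.norm_tsum_le_of_forall_le_of_nonneg zero_le_one
    (norm_coeff_mul_pow_le_one F.2 hx)

@[simp]
lemma eval_C (hx : ‖x‖ ≤ 1) (r : K) (hr : ‖r‖ ≤ 1) : eval hx (C r hr) = r := by
  rw [eval_apply, tsum_eq_single 0 fun n hn => by simp [C, coeff_C, hn]]
  simp [C]

@[simp]
lemma eval_X (hx : ‖x‖ ≤ 1) : eval hx X = x := by
  rw [eval_apply, tsum_eq_single 1 fun n hn => by simp [X, coeff_X, hn]]
  simp [X]

@[simp]
lemma eval_geometric (hx : ‖x‖ ≤ 1) (q : K) (hq : ‖q‖ < 1) :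
    eval hx (geometric q hq) = (1 - q * x)⁻¹ := by
  have hqx : ‖q * x‖ < 1 := by
    rw [norm_mul]
    exact (mul_le_of_le_one_right (norm_nonneg q) hx).trans_lt hq
  simp only [eval_apply, geometric, coeff_mk, ← mul_pow]
  exact tsum_geometric_of_norm_lt_one hqx

lemma tsum_tsum_mul_coeff_mul_pow (hf : Tendsto f cofinite (𝓝 0)) (V : ι → integralTate K)
    (hx : ‖x‖ ≤ 1) :
    ∑' m, (∑' i, f i * coeff m (V i : K⟦X⟧)) * x ^ m = ∑' i, f i * eval hx (V i) := by
  set A : ι → ℕ → K := fun i m => coeff m (V i : K⟦X⟧) * x ^ m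
  have hA (i : ι) (m : ℕ) : ‖A i m‖ ≤ 1 := norm_coeff_mul_pow_le_one (V i).2 hx m
  have hrow (i : ι) : Summable (A i) := summable_coeff_mul_pow (V i).2 hx
  have hsum : Summable (Function.uncurry fun i m => f i * A i m) :=
    NonarchimedeanAddGroup.summable_of_tendsto_cofinite_zero
      (tendsto_cofinite_prod_mul hf hA fun i => (hrow i).tendsto_cofinite_zero)
  calc ∑' m, (∑' i, f i * coeff m (V i : K⟦X⟧)) * x ^ m = ∑' m, ∑' i, f i * A i m := by
        simp_rw [A, ← tsum_mul_right, mul_assoc]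
    _ = ∑' i, ∑' m, f i * A i m :=
        hsum.tsum_comm' (fun i => (hrow i).mul_left (f i)) fun m =>
          NonarchimedeanAddGroup.summable_of_tendsto_cofinite_zero
            (tendsto_mul_cofinite_of_norm_le_one hf fun i => hA i m)
    _ = ∑' i, f i * eval hx (V i) := by simp_rw [tsum_mul_left]; rfl

end integralTate

end PowerSeries

end

open PowerSeries.integralTate in
theorem stmt3_general (p k : ℕ) [Fact p.Prime]
    (a b c d : ℚ_[p]) (ha : ‖a‖ = 1) (hb : ‖b‖ ≤ 1) (hd : ‖d‖ ≤ 1)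
    (hc : ‖c‖ ≤ (p : ℝ)⁻¹)
    (f : ℕ → ℚ_[p]) (hf : Filter.Tendsto f Filter.atTop (nhds 0)) :
    (∀ x : ℚ_[p], ‖x‖ ≤ 1 → ‖(d * x - b) / (-c * x + a)‖ ≤ 1) ∧
    (∀ x : ℚ_[p], ‖x‖ ≤ 1 →
      Summable (fun n : ℕ => f n * ((d * x - b) / (-c * x + a)) ^ n)) ∧
    ∃ g : ℕ → ℚ_[p], Filter.Tendsto g Filter.atTop (nhds 0) ∧
      ∀ x : ℚ_[p], ‖x‖ ≤ 1 →
        ∑' n : ℕ, g n * x ^ n =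
          ((a * d - b * c)⁻¹) ^ (k / 2) * (-c * x + a) ^ k *
            ∑' n : ℕ, f n * ((d * x - b) / (-c * x + a)) ^ n := by
  have hc1 : ‖c‖ < 1 :=
    hc.trans_lt (inv_lt_one_of_one_lt₀ (mod_cast (Fact.out : p.Prime).one_lt))
  have ha0 : a ≠ 0 := norm_ne_zero_iff.mp (by simp [ha])
  let u : integralTate ℚ_[p] :=
    integralTate.C a⁻¹ (by simp [ha]) *
      (integralTate.C d hd * integralTate.X - integralTate.C b hb) *
      geometric (c * a⁻¹) (by simpa [ha] using hc1)
  let w : integralTate ℚ_[p] := -integralTate.C c hc1.le * integralTate.X + integralTate.C a ha.le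
  let V : ℕ → integralTate ℚ_[p] := fun n => w ^ k * u ^ n
  have hu (x : ℚ_[p]) (hx : ‖x‖ ≤ 1) : eval hx u = (d * x - b) / (-c * x + a) := by
    have hfactor : -c * x + a = a * (1 - c * a⁻¹ * x) := by field_simp; ring
    simp only [u, map_mul, map_sub, eval_C, eval_X, eval_geometric]
    rw [hfactor, div_eq_mul_inv, mul_inv]
    ring
  have hw (x : ℚ_[p]) (hx : ‖x‖ ≤ 1) : eval hx w = -c * x + a := by simp [w]
  rw [← Nat.cofinite_eq_atTop] at hf ⊢
  refine ⟨fun x hx => hu x hx ▸ norm_eval_le_one hx u, fun x hx => ?_, ?_⟩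
  · refine NonarchimedeanAddGroup.summable_of_tendsto_cofinite_zero
      (tendsto_mul_cofinite_of_norm_le_one hf fun n => ?_)
    rw [← hu x hx, ← map_pow]
    exact norm_eval_le_one hx _
  set D := ((a * d - b * c)⁻¹) ^ (k / 2)
  refine ⟨fun m => D * ∑' n, f n * coeff m (V n : ℚ_[p]⟦X⟧),
    by simpa using (tendsto_tsum_mul_coeff hf V).const_mul D, fun x hx => ?_⟩
  calc _ = D * ∑' n, f n * eval hx (V n) := by
        simp_rw [mul_assoc, tsum_mul_left, ← tsum_tsum_mul_coeff_mul_pow hf V hx]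
    _ = _ := by
        simp_rw [V, map_mul, map_pow, hu x hx, hw x hx, mul_left_comm (f _), tsum_mul_left,
          mul_assoc]

/-- for `σ = [[a,b],[c,d]] ∈ Σ₀(p)` (integral entries, `a` a unit, `p ∣ c`,
nonzero determinant) and `f = ∑ f_n x^n` in the Tate algebra (coefficients tending to 0),
the Möbius map `x ↦ (dx-b)/(-cx+a)` sends ℤ_p into ℤ_p, the substituted series converges,
and the weight-`k` image `σ ·_k f` is again given by a Tate series: there is a coefficient
sequence `g` tending to `0` with
`∑ g_n x^n = det(σ)^{-k/2} (-cx+a)^k f((dx-b)/(-cx+a))` for all `x ∈ ℤ_p`. -/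
theorem stmt3 (p k : ℕ) [Fact p.Prime] (hk : Even k)
    (a b c d : ℚ_[p]) (ha : ‖a‖ = 1) (hb : ‖b‖ ≤ 1) (hd : ‖d‖ ≤ 1)
    (hc : ‖c‖ ≤ (p : ℝ)⁻¹) (hdet : a * d - b * c ≠ 0)
    (f : ℕ → ℚ_[p]) (hf : Filter.Tendsto f Filter.atTop (nhds 0)) :
    (∀ x : ℚ_[p], ‖x‖ ≤ 1 → ‖(d * x - b) / (-c * x + a)‖ ≤ 1) ∧
    (∀ x : ℚ_[p], ‖x‖ ≤ 1 →
      Summable (fun n : ℕ => f n * ((d * x - b) / (-c * x + a)) ^ n)) ∧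
    ∃ g : ℕ → ℚ_[p], Filter.Tendsto g Filter.atTop (nhds 0) ∧
      ∀ x : ℚ_[p], ‖x‖ ≤ 1 →
        ∑' n : ℕ, g n * x ^ n =
          ((a * d - b * c)⁻¹) ^ (k / 2) * (-c * x + a) ^ k *
            ∑' n : ℕ, f n * ((d * x - b) / (-c * x + a)) ^ n :=
  stmt3_general p k a b c d ha hb hd hc f hf
end

section
/- Let D_k(Z_p) be the set of continuous linear functionals ω on the weight-k Tate algebra T_k with ω(x^i) ∈ Z_p for all i ≥ 0, and define the filtration F^0 D_k(Z_p) = {ω : ω(x^i) = 0 for 0 ≤ i ≤ k} and, for n ≥ 1, F^n D_k(Z_p) = {ω ∈ F^0 : ω(x^{k+i}) ∈ p^{n−i+1} Z_p for 1 ≤ i ≤ n}. Then each F^n D_k(Z_p) is stable under the right action of Γ_0(pZ_p). -/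
/-!
Over an ultrametric field, a power series whose coefficients tend to zero is determined by its
values on the closed unit disc. Hence `act i` is the coefficient sequence of the formal power
series `det(σ)^(-k/2) (a - c X)^k ((d X - b) / (a - c X))^i`. For `σ ∈ Γ₀(pℤ_p)` we have
`‖a‖ = 1` and `‖c‖ ≤ p⁻¹`, so `1 / (a - c X)` has coefficients of norm `≤ p^(-m)`, and the
`m`-th coefficient of the product has norm `≤ p^(-(m - i))`; for `i ≤ k` the series is a
polynomial of degree `≤ k`. Pairing with the moments of `ω`, the ultrametric inequality bounds
every term of `(ω ·_k σ)(x^(k+j))` by `p^(-(n-j+1))`.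
-/

open Filter Topology Finset

namespace PowerSeries

/-- `‖coeff m f‖ ≤ r ^ (m - j)` with truncated subtraction: the coefficients of degree `≤ j` are
integral, and beyond degree `j` they decay geometrically with ratio `r`. -/
def CoeffDecay {R : Type*} [Semiring R] [Norm R] (r : ℝ) (j : ℕ) (f : R⟦X⟧) : Prop :=
  ∀ m, ‖coeff m f‖ ≤ r ^ (m - j)

section Decay

variable {𝕜 : Type*} [NormedField 𝕜] {r : ℝ} {i j : ℕ} {f g : 𝕜⟦X⟧}

theorem coeffDecay_C {u : 𝕜} (hu : ‖u‖ ≤ 1) (hr0 : 0 ≤ r) : CoeffDecay r 0 (C u) := by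
  intro m
  rw [coeff_C]
  split_ifs with hm
  · simpa [hm] using hu
  · simpa using pow_nonneg hr0 m

theorem coeffDecay_C_add_C_mul_X {u v : 𝕜} (hu : ‖u‖ ≤ 1) (hv : ‖v‖ ≤ r) :
    CoeffDecay r 0 (C u + C v * X) := by
  have hr0 : 0 ≤ r := (norm_nonneg v).trans hv
  intro m
  rw [map_add, coeff_C, coeff_C_mul, coeff_X]
  rcases m with _ | _ | m <;> simp [hu, hv, hr0]

theorem coeffDecay_C_add_C_mul_X_one {u v : 𝕜} (hu : ‖u‖ ≤ 1) (hv : ‖v‖ ≤ 1) (hr0 : 0 ≤ r) :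
    CoeffDecay r 1 (C u + C v * X) := by
  intro m
  rw [map_add, coeff_C, coeff_C_mul, coeff_X]
  rcases m with _ | _ | m <;> simp [hu, hv, hr0]

variable [IsUltrametricDist 𝕜]

theorem CoeffDecay.mul (hr0 : 0 ≤ r) (hr1 : r ≤ 1) (hf : CoeffDecay r i f)
    (hg : CoeffDecay r j g) : CoeffDecay r (i + j) (f * g) := by
  intro m
  rw [coeff_mul]
  refine IsUltrametricDist.norm_sum_le_of_forall_le_of_nonneg (by positivity) fun uv huv => ?_
  rw [HasAntidiagonal.mem_antidiagonal] at huv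
  calc ‖coeff uv.1 f * coeff uv.2 g‖ ≤ r ^ (uv.1 - i) * r ^ (uv.2 - j) := by
        rw [norm_mul]; exact mul_le_mul (hf _) (hg _) (norm_nonneg _) (by positivity)
    _ = r ^ (uv.1 - i + (uv.2 - j)) := (pow_add _ _ _).symm
    _ ≤ r ^ (m - (i + j)) := pow_le_pow_of_le_one hr0 hr1 (by omega)

theorem CoeffDecay.pow (hr0 : 0 ≤ r) (hr1 : r ≤ 1) (hf : CoeffDecay r j f) (n : ℕ) :
    CoeffDecay r (n * j) (f ^ n) := by
  induction n with
  | zero => simpa using coeffDecay_C (r := r) (u := (1 : 𝕜)) (by simp) hr0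
  | succ n ih => simpa [pow_succ, add_mul] using ih.mul hr0 hr1 hf

theorem CoeffDecay.inv {f : 𝕜⟦X⟧} (hr0 : 0 ≤ r) (hf : CoeffDecay r 0 f)
    (h0 : ‖constantCoeff f‖ = 1) : CoeffDecay r 0 f⁻¹ := by
  intro n
  induction n using Nat.strong_induction_on with
  | _ n ih =>
  rw [coeff_inv]
  split_ifs with hn
  · simp [hn, h0]
  · rw [norm_mul, norm_neg, norm_inv, h0, inv_one, one_mul]
    refine IsUltrametricDist.norm_sum_le_of_forall_le_of_nonneg (by positivity) fun uv huv => ?_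
    rw [HasAntidiagonal.mem_antidiagonal] at huv
    split_ifs with hv
    · calc ‖coeff uv.1 f * coeff uv.2 f⁻¹‖ ≤ r ^ uv.1 * r ^ uv.2 := by
            rw [norm_mul]
            exact mul_le_mul (by simpa using hf uv.1) (by simpa using ih uv.2 hv) (norm_nonneg _)
              (by positivity)
        _ = r ^ (n - 0) := by rw [← pow_add, huv, Nat.sub_zero]
    · simpa using pow_nonneg hr0 n

end Decay

section Eval

theorem tsum_coeff_C_add_C_mul_X_mul_pow {R : Type*} [NormedRing R] (u v x : R) :
    ∑' m, coeff m (C u + C v * X) * x ^ m = u + v * x := by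
  rw [tsum_eq_sum (s := range 2) fun m hm => by
    rw [mem_range] at hm
    simp [coeff_C, coeff_X, show m ≠ 1 by omega, show m ≠ 0 by omega]]
  simp [sum_range_succ, coeff_C, coeff_X]

theorem tsum_coeff_mul_mul_pow {R : Type*} [NormedCommRing R] [CompleteSpace R] {f g : R⟦X⟧}
    {x : R} (hf : Summable fun m => ‖coeff m f * x ^ m‖)
    (hg : Summable fun m => ‖coeff m g * x ^ m‖) :
    ∑' m, coeff m (f * g) * x ^ m = (∑' m, coeff m f * x ^ m) * ∑' m, coeff m g * x ^ m := by
  rw [tsum_mul_tsum_eq_tsum_sum_antidiagonal_of_summable_norm hf hg]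
  refine tsum_congr fun m => ?_
  rw [coeff_mul, sum_mul]
  refine sum_congr rfl fun uv huv => ?_
  rw [← HasAntidiagonal.mem_antidiagonal.mp huv, pow_add]
  ring

variable {𝕜 : Type*} [NormedField 𝕜] {r : ℝ} {j : ℕ} {f : 𝕜⟦X⟧}

theorem CoeffDecay.summable_norm_mul_pow (hr0 : 0 ≤ r) (hr1 : r < 1) (hf : CoeffDecay r j f)
    {x : 𝕜} (hx : ‖x‖ ≤ 1) : Summable fun m => ‖coeff m f * x ^ m‖ := by
  refine .of_nonneg_of_le (fun _ => norm_nonneg _) (fun m => ?_)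
    ((summable_nat_add_iff (f := fun m => r ^ (m - j)) j).mp ?_)
  · rw [norm_mul, norm_pow]
    exact (mul_le_of_le_one_right (norm_nonneg _) (pow_le_one₀ (norm_nonneg _) hx)).trans (hf m)
  · simpa using summable_geometric_of_lt_one hr0 hr1

theorem CoeffDecay.tendsto_coeff (hr0 : 0 ≤ r) (hr1 : r < 1) (hf : CoeffDecay r j f) :
    Tendsto (fun m => coeff m f) atTop (𝓝 0) :=
  squeeze_zero_norm hf <|
    (tendsto_pow_atTop_nhds_zero_of_lt_one hr0 hr1).comp (tendsto_sub_atTop_nat j)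

variable [IsUltrametricDist 𝕜] [CompleteSpace 𝕜]

theorem CoeffDecay.tsum_coeff_pow_mul_pow (hr0 : 0 ≤ r) (hr1 : r < 1) (hf : CoeffDecay r j f)
    {x : 𝕜} (hx : ‖x‖ ≤ 1) (n : ℕ) :
    ∑' m, coeff m (f ^ n) * x ^ m = (∑' m, coeff m f * x ^ m) ^ n := by
  induction n with
  | zero => simp
  | succ n ih =>
    rw [pow_succ, tsum_coeff_mul_mul_pow ((hf.pow hr0 hr1.le n).summable_norm_mul_pow hr0 hr1 hx)
      (hf.summable_norm_mul_pow hr0 hr1 hx), ih, pow_succ]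

theorem CoeffDecay.tsum_coeff_inv_mul_pow (hr0 : 0 ≤ r) (hr1 : r < 1) (hf : CoeffDecay r 0 f)
    (h0 : ‖constantCoeff f‖ = 1) {x : 𝕜} (hx : ‖x‖ ≤ 1) :
    ∑' m, coeff m f⁻¹ * x ^ m = (∑' m, coeff m f * x ^ m)⁻¹ := by
  refine eq_inv_of_mul_eq_one_left ?_
  rw [← tsum_coeff_mul_mul_pow ((hf.inv hr0 h0).summable_norm_mul_pow hr0 hr1 hx)
    (hf.summable_norm_mul_pow hr0 hr1 hx),
    PowerSeries.inv_mul_cancel _ (by simp [← norm_ne_zero_iff, h0])]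
  simp

end Eval

end PowerSeries

section Tate

variable {𝕜 : Type*} [NontriviallyNormedField 𝕜] [IsUltrametricDist 𝕜] [CompleteSpace 𝕜]

theorem summable_mul_pow_of_tendsto_zero {g : ℕ → 𝕜} (hg : Tendsto g atTop (𝓝 0)) {x : 𝕜}
    (hx : ‖x‖ ≤ 1) : Summable fun m => g m * x ^ m := by
  refine NonarchimedeanAddGroup.summable_of_tendsto_cofinite_zero ?_
  rw [Nat.cofinite_eq_atTop, tendsto_zero_iff_norm_tendsto_zero]
  refine squeeze_zero (fun _ => norm_nonneg _) (fun m => ?_)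
    (tendsto_zero_iff_norm_tendsto_zero.mp hg)
  rw [norm_mul, norm_pow]
  exact mul_le_of_le_one_right (norm_nonneg _) (pow_le_one₀ (norm_nonneg _) hx)

theorem hasFPowerSeriesOnBall_tsum_mul_pow {g : ℕ → 𝕜} (hg : Tendsto g atTop (𝓝 0)) :
    HasFPowerSeriesOnBall (fun x => ∑' m, g m * x ^ m)
      (FormalMultilinearSeries.ofScalars 𝕜 g) 0 1 where
  r_le := by
    obtain ⟨C, hC⟩ := hg.norm.bddAbove_range
    refine ENNReal.coe_one ▸ FormalMultilinearSeries.le_radius_of_bound _ C fun n => ?_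
    simpa using hC ⟨n, rfl⟩
  r_pos := one_pos
  hasSum {y} hy := by
    rw [← ENNReal.coe_one, Metric.eball_coe, mem_ball_zero_iff] at hy
    simpa [FormalMultilinearSeries.ofScalars_apply_eq, mul_comm] using
      (summable_mul_pow_of_tendsto_zero hg (x := y) (mod_cast hy.le)).hasSum

theorem eq_of_tsum_mul_pow_eq {f g : ℕ → 𝕜} (hf : Tendsto f atTop (𝓝 0))
    (hg : Tendsto g atTop (𝓝 0))
    (h : ∀ x : 𝕜, ‖x‖ ≤ 1 → ∑' m, f m * x ^ m = ∑' m, g m * x ^ m) : f = g := by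
  refine FormalMultilinearSeries.ofScalars_series_injective 𝕜 𝕜 <|
    HasFPowerSeriesAt.eq_formalMultilinearSeries_of_eventually
      (hasFPowerSeriesOnBall_tsum_mul_pow hf).hasFPowerSeriesAt
      (hasFPowerSeriesOnBall_tsum_mul_pow hg).hasFPowerSeriesAt ?_
  filter_upwards [Metric.closedBall_mem_nhds (0 : 𝕜) one_pos] with x hx
  exact h x (by simpa using hx)

end Tate

section WeightAction

open PowerSeries

variable {𝕜 : Type*} [NormedField 𝕜]

/-- The power series of `σ ·_k x^i` for `σ = [[a, b], [c, d]]`. -/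
noncomputable def weightActionSeries (k : ℕ) (a b c d : 𝕜) (i : ℕ) : 𝕜⟦X⟧ :=
  C ((a * d - b * c)⁻¹ ^ (k / 2)) * (C a + C (-c) * X) ^ k *
    ((C (-b) + C d * X) * (C a + C (-c) * X)⁻¹) ^ i

variable {k i : ℕ} {a b c d : 𝕜}

theorem weightActionSeries_of_le (ha : a ≠ 0) (hi : i ≤ k) :
    weightActionSeries k a b c d i = C ((a * d - b * c)⁻¹ ^ (k / 2)) *
      (C (-b) + C d * X) ^ i * (C a + C (-c) * X) ^ (k - i) := by
  have hinv : (C a + C (-c) * X) * (C a + C (-c) * X)⁻¹ = 1 :=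
    PowerSeries.mul_inv_cancel _ (by simpa using ha)
  obtain ⟨j, rfl⟩ := Nat.exists_eq_add_of_le hi
  rw [weightActionSeries, Nat.add_sub_cancel_left]
  generalize C a + C (-c) * X = L at hinv ⊢
  generalize C (-b) + C d * X = M
  linear_combination (C ((a * d - b * c)⁻¹ ^ ((i + j) / 2)) * M ^ i * L ^ j) *
    congrArg (· ^ i) hinv

theorem coeff_weightActionSeries_of_le (ha : a ≠ 0) (hi : i ≤ k) {m : ℕ} (hm : k < m) :
    coeff m (weightActionSeries k a b c d i) = 0 := by
  rw [weightActionSeries_of_le ha hi]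
  have hpoly : C ((a * d - b * c)⁻¹ ^ (k / 2)) * (C (-b) + C d * X) ^ i *
      (C a + C (-c) * X) ^ (k - i) =
        ((Polynomial.C ((a * d - b * c)⁻¹ ^ (k / 2)) *
          (Polynomial.C (-b) + Polynomial.C d * Polynomial.X) ^ i *
          (Polynomial.C a + Polynomial.C (-c) * Polynomial.X) ^ (k - i) : Polynomial 𝕜) :
          𝕜⟦X⟧) := by
    push_cast
    rfl
  rw [hpoly, Polynomial.coeff_coe]
  refine Polynomial.coeff_eq_zero_of_natDegree_lt (lt_of_le_of_lt ?_ hm)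
  compute_degree
  omega

variable {r : ℝ} [IsUltrametricDist 𝕜]

theorem coeffDecay_weightActionSeries (ha : ‖a‖ = 1) (hb : ‖b‖ ≤ 1) (hd : ‖d‖ ≤ 1)
    (hdet : ‖a * d - b * c‖ = 1) (hc : ‖c‖ ≤ r) (hr1 : r ≤ 1) (i : ℕ) :
    CoeffDecay r i (weightActionSeries k a b c d i) := by
  have hr0 : 0 ≤ r := (norm_nonneg c).trans hc
  have hL : CoeffDecay r 0 (C a + C (-c) * X) :=
    coeffDecay_C_add_C_mul_X ha.le (by rwa [norm_neg])
  have hM : CoeffDecay r 1 (C (-b) + C d * X) :=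
    coeffDecay_C_add_C_mul_X_one (by rwa [norm_neg]) hd hr0
  have hδ : CoeffDecay r 0 (C ((a * d - b * c)⁻¹ ^ (k / 2))) :=
    coeffDecay_C (by simp [hdet]) hr0
  rw [weightActionSeries]
  convert (hδ.mul hr0 hr1 (hL.pow hr0 hr1 k)).mul hr0 hr1
    ((hM.mul hr0 hr1 (hL.inv hr0 (by simpa using ha))).pow hr0 hr1 i) using 1
  ring

variable [CompleteSpace 𝕜]

theorem tsum_coeff_weightActionSeries_mul_pow (ha : ‖a‖ = 1) (hb : ‖b‖ ≤ 1) (hd : ‖d‖ ≤ 1)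
    (hc : ‖c‖ < 1) {x : 𝕜} (hx : ‖x‖ ≤ 1) :
    ∑' m, coeff m (weightActionSeries k a b c d i) * x ^ m =
      ((a * d - b * c)⁻¹) ^ (k / 2) * (-c * x + a) ^ k * ((d * x - b) / (-c * x + a)) ^ i := by
  have hr0 : 0 ≤ ‖c‖ := norm_nonneg c
  have hL : CoeffDecay ‖c‖ 0 (C a + C (-c) * X) :=
    coeffDecay_C_add_C_mul_X ha.le (norm_neg c).le
  have hM : CoeffDecay ‖c‖ 1 (C (-b) + C d * X) :=
    coeffDecay_C_add_C_mul_X_one (by rwa [norm_neg]) hd hr0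
  have hLinv := hL.inv hr0 (by simpa using ha)
  have hMLinv := hM.mul hr0 hc.le hLinv
  simp only [weightActionSeries, mul_assoc, coeff_C_mul, tsum_mul_left]
  rw [tsum_coeff_mul_mul_pow ((hL.pow hr0 hc.le k).summable_norm_mul_pow hr0 hc hx)
      ((hMLinv.pow hr0 hc.le i).summable_norm_mul_pow hr0 hc hx),
    hL.tsum_coeff_pow_mul_pow hr0 hc hx, hMLinv.tsum_coeff_pow_mul_pow hr0 hc hx,
    tsum_coeff_mul_mul_pow (hM.summable_norm_mul_pow hr0 hc hx)
      (hLinv.summable_norm_mul_pow hr0 hc hx),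
    hL.tsum_coeff_inv_mul_pow hr0 hc (by simpa using ha) hx,
    tsum_coeff_C_add_C_mul_X_mul_pow, tsum_coeff_C_add_C_mul_X_mul_pow]
  ring

end WeightAction

/-- `F^n D_k(ℤ_p)`, a distribution `ω` being recorded by its moments `μ i = ω(x^i)`. -/
def MemFiltration (p k n : ℕ) [Fact p.Prime] (μ : ℕ → ℚ_[p]) : Prop :=
  (∀ i, ‖μ i‖ ≤ 1) ∧ (∀ i ≤ k, μ i = 0) ∧
    ∀ i, 1 ≤ i → i ≤ n → ‖μ (k + i)‖ ≤ (p : ℝ) ^ (-((n : ℤ) - i + 1))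

namespace MemFiltration

variable {p k n : ℕ} [Fact p.Prime] {μ : ℕ → ℚ_[p]}

theorem norm_mul_le (hμ : MemFiltration p k n μ) {j m : ℕ} {u : ℚ_[p]}
    (hu : ‖u‖ ≤ (p : ℝ)⁻¹ ^ (m - (k + j))) : ‖u * μ m‖ ≤ (p : ℝ) ^ (-((n : ℤ) - j + 1)) := by
  have hp : (1 : ℝ) ≤ p := mod_cast (Fact.out : p.Prime).one_lt.le
  obtain hm | ⟨t, rfl, ht⟩ : m ≤ k ∨ ∃ t, m = k + t ∧ 1 ≤ t :=
    (le_or_gt m k).imp_right fun h => ⟨m - k, by omega, by omega⟩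
  · rw [hμ.2.1 m hm, mul_zero, norm_zero]
    positivity
  rw [inv_pow, ← zpow_natCast, ← zpow_neg, Nat.add_sub_add_left] at hu
  rw [norm_mul]
  rcases le_or_gt t n with htn | htn
  · calc ‖u‖ * ‖μ (k + t)‖
          ≤ (p : ℝ) ^ (-((t - j : ℕ) : ℤ)) * (p : ℝ) ^ (-((n : ℤ) - t + 1)) :=
          mul_le_mul hu (hμ.2.2 t ht htn) (norm_nonneg _) (by positivity)
      _ ≤ (p : ℝ) ^ (-((n : ℤ) - j + 1)) := by
          rw [← zpow_add₀ (by positivity)]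
          exact zpow_le_zpow_right₀ hp (by omega)
  · calc ‖u‖ * ‖μ (k + t)‖ ≤ (p : ℝ) ^ (-((t - j : ℕ) : ℤ)) :=
          (mul_le_of_le_one_right (norm_nonneg _) (hμ.1 _)).trans hu
      _ ≤ (p : ℝ) ^ (-((n : ℤ) - j + 1)) := zpow_le_zpow_right₀ hp (by omega)

theorem tsum_mul {A : ℕ → ℕ → ℚ_[p]} (hA : ∀ i m, ‖A i m‖ ≤ (p : ℝ)⁻¹ ^ (m - i))
    (hA0 : ∀ i m, i ≤ k → k < m → A i m = 0) (hμ : MemFiltration p k n μ) :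
    MemFiltration p k n fun i => ∑' m, A i m * μ m := by
  have hp : (0 : ℝ) ≤ (p : ℝ)⁻¹ := by positivity
  have hp1 : (p : ℝ)⁻¹ ≤ 1 := inv_le_one_of_one_le₀ (mod_cast (Fact.out : p.Prime).one_lt.le)
  refine ⟨fun i => ?_, fun i hi => ?_, fun j _ _ => ?_⟩
  · refine IsUltrametricDist.norm_tsum_le_of_forall_le_of_nonneg zero_le_one fun m => ?_
    rw [norm_mul]
    exact mul_le_one₀ ((hA i m).trans (pow_le_one₀ hp hp1)) (norm_nonneg _) (hμ.1 m)
  · refine (tsum_congr fun m => ?_).trans tsum_zero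
    rcases le_or_gt m k with hm | hm
    · rw [hμ.2.1 m hm, mul_zero]
    · rw [hA0 i m hi hm, zero_mul]
  · exact IsUltrametricDist.norm_tsum_le_of_forall_le_of_nonneg (by positivity)
      fun m => hμ.norm_mul_le (hA _ m)

end MemFiltration

theorem norm_eq_one_of_norm_mul_sub_mul_eq_one {𝕜 : Type*} [NormedField 𝕜] [IsUltrametricDist 𝕜]
    {a b c d : 𝕜} (ha : ‖a‖ ≤ 1) (hd : ‖d‖ ≤ 1) (hbc : ‖b * c‖ < 1)
    (hdet : ‖a * d - b * c‖ = 1) : ‖a‖ = 1 := by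
  have had : 1 ≤ ‖a * d‖ := by
    have := IsUltrametricDist.norm_add_le_max (a * d) (-(b * c))
    rw [← sub_eq_add_neg, hdet, norm_neg] at this
    exact (le_max_iff.mp this).resolve_right hbc.not_ge
  rw [norm_mul] at had
  nlinarith [norm_nonneg a, norm_nonneg d]

theorem stmt5_general (p k n : ℕ) [Fact p.Prime]
    (a b c d : ℚ_[p]) (ha : ‖a‖ ≤ 1) (hb : ‖b‖ ≤ 1) (hd : ‖d‖ ≤ 1)
    (hdet : ‖a * d - b * c‖ = 1) (hpc : ‖c‖ ≤ (p : ℝ)⁻¹)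
    -- `act i` is the coefficient sequence of the Tate series `σ ·_k x^i`
    (act : ℕ → ℕ → ℚ_[p])
    (hact0 : ∀ i, Filter.Tendsto (act i) Filter.atTop (nhds 0))
    (hact : ∀ i : ℕ, ∀ x : ℚ_[p], ‖x‖ ≤ 1 →
      ∑' m : ℕ, act i m * x ^ m =
        ((a * d - b * c)⁻¹) ^ (k / 2) * (-c * x + a) ^ k *
          ((d * x - b) / (-c * x + a)) ^ i)
    -- the moments of ω, assumed to lie in F^n D_k(ℤ_p)
    (μ : ℕ → ℚ_[p])
    (hμ1 : ∀ i, ‖μ i‖ ≤ 1)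
    (hμ2 : ∀ i ≤ k, μ i = 0)
    (hμ3 : ∀ i, 1 ≤ i → i ≤ n → ‖μ (k + i)‖ ≤ (p : ℝ) ^ (-((n : ℤ) - i + 1))) :
    -- the moments of ω ·_k σ, namely `i ↦ ∑' m, act i m * μ m`, again lie in F^n D_k(ℤ_p)
    (∀ i, ‖∑' m : ℕ, act i m * μ m‖ ≤ 1) ∧
    (∀ i ≤ k, ∑' m : ℕ, act i m * μ m = 0) ∧
    (∀ i, 1 ≤ i → i ≤ n →
      ‖∑' m : ℕ, act (k + i) m * μ m‖ ≤ (p : ℝ) ^ (-((n : ℤ) - i + 1))) := by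
  have hp : (p : ℝ)⁻¹ < 1 := inv_lt_one_of_one_lt₀ (mod_cast (Fact.out : p.Prime).one_lt)
  have hc : ‖c‖ < 1 := hpc.trans_lt hp
  have ha1 : ‖a‖ = 1 := norm_eq_one_of_norm_mul_sub_mul_eq_one ha hd
    (by rw [norm_mul]; nlinarith [norm_nonneg b, norm_nonneg c]) hdet
  have hF := coeffDecay_weightActionSeries (k := k) ha1 hb hd hdet hpc hp.le
  obtain rfl : act = fun i m => PowerSeries.coeff m (weightActionSeries k a b c d i) :=
    funext fun i => eq_of_tsum_mul_pow_eq (hact0 i) ((hF i).tendsto_coeff (by positivity) hp)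
      fun x hx => by rw [hact i x hx, tsum_coeff_weightActionSeries_mul_pow ha1 hb hd hc hx]
  exact MemFiltration.tsum_mul hF
    (fun i _ hi hm => coeff_weightActionSeries_of_le (norm_ne_zero_iff.mp (by simp [ha1])) hi hm)
    ⟨hμ1, hμ2, hμ3⟩

/-- stability of the filtration `F^n D_k(ℤ_p)` under the right action of
`Γ₀(pℤ_p)`. A distribution `ω ∈ D_k(ℤ_p)` is encoded by its moment sequence
`μ i = ω(x^i)` (all in ℤ_p); the dual action is `(ω ·_k σ)(x^i) = ω(σ ·_k x^i)`, computed
by pairing the Tate-algebra coefficients `act i` of `σ ·_k x^i` (characterized by the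
evaluation identity below) against the moments.  If `μ` satisfies the `F^n` conditions
(vanishing moments up to `k`, and `ω(x^{k+i}) ∈ p^{n-i+1}ℤ_p` for `1 ≤ i ≤ n`),
then so does `ω ·_k σ`. -/
theorem stmt5 (p k n : ℕ) [Fact p.Prime] (hk : Even k)
    (a b c d : ℚ_[p]) (ha : ‖a‖ ≤ 1) (hb : ‖b‖ ≤ 1) (hcc : ‖c‖ ≤ 1) (hd : ‖d‖ ≤ 1)
    (hdet : ‖a * d - b * c‖ = 1) (hpc : ‖c‖ ≤ (p : ℝ)⁻¹)
    -- `act i` is the coefficient sequence of the Tate series `σ ·_k x^i`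
    (act : ℕ → ℕ → ℚ_[p])
    (hact0 : ∀ i, Filter.Tendsto (act i) Filter.atTop (nhds 0))
    (hact : ∀ i : ℕ, ∀ x : ℚ_[p], ‖x‖ ≤ 1 →
      ∑' m : ℕ, act i m * x ^ m =
        ((a * d - b * c)⁻¹) ^ (k / 2) * (-c * x + a) ^ k *
          ((d * x - b) / (-c * x + a)) ^ i)
    -- the moments of ω, assumed to lie in F^n D_k(ℤ_p)
    (μ : ℕ → ℚ_[p])
    (hμ1 : ∀ i, ‖μ i‖ ≤ 1)
    (hμ2 : ∀ i ≤ k, μ i = 0)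
    (hμ3 : ∀ i, 1 ≤ i → i ≤ n → ‖μ (k + i)‖ ≤ (p : ℝ) ^ (-((n : ℤ) - i + 1))) :
    -- the moments of ω ·_k σ, namely `i ↦ ∑' m, act i m * μ m`, again lie in F^n D_k(ℤ_p)
    (∀ i, ‖∑' m : ℕ, act i m * μ m‖ ≤ 1) ∧
    (∀ i ≤ k, ∑' m : ℕ, act i m * μ m = 0) ∧
    (∀ i, 1 ≤ i → i ≤ n →
      ‖∑' m : ℕ, act (k + i) m * μ m‖ ≤ (p : ℝ) ^ (-((n : ℤ) - i + 1))) :=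
  stmt5_general p k n a b c d ha hb hd hdet hpc act hact0 hact μ hμ1 hμ2 hμ3
end

section
/- The natural map D_k(Z_p) → lim_n D_k(Z_p)/F^n D_k(Z_p) is an isomorphism of Z_p-modules (injective and surjective), where F^n is the filtration by moment conditions. -/
/-!
If consecutive members of a compatible system differ by an element of `F^n`, the moments
up to `k` never change, while the `(k + j)`-th moments form a sequence in `ℤ_p` whose
`n`-th step lies in `p^{n-j+1} ℤ_p`. As `ℤ_p` is complete and ultrametric, this sequence
converges to a limit within `p^{-(n-j+1)}` of its `n`-th term; these limits are the moments
of the preimage. Injectivity: a moment lying in `p^m ℤ_p` for every `m` vanishes.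
-/

/-- The `F^n`-filtration condition on a distribution in `D_k(ℤ_p)`, encoded by its
moment sequence `μ i = ω(x^i) ∈ ℤ_p`: the moments up to `k` vanish and
`ω(x^{k+i}) ∈ p^{n-i+1} ℤ_p` for `1 ≤ i ≤ n`. -/
def FilCond (p k n : ℕ) [Fact p.Prime] (μ : ℕ → ℤ_[p]) : Prop :=
  (∀ i ≤ k, μ i = 0) ∧
  ∀ i, 1 ≤ i → i ≤ n → ‖μ (k + i)‖ ≤ (p : ℝ) ^ (-((n : ℤ) - i + 1))

open Filter Topology

namespace IsUltrametricDist

variable {X : Type*} [PseudoMetricSpace X] [IsUltrametricDist X]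

lemma dist_le_of_dist_succ_le {a : ℕ → X} {ε : ℕ → ℝ} (hε : Antitone ε)
    (h : ∀ n, dist (a (n + 1)) (a n) ≤ ε n) {n m : ℕ} (hnm : n ≤ m) :
    dist (a m) (a n) ≤ ε n := by
  induction m, hnm using Nat.le_induction with
  | base => simpa using dist_nonneg.trans (h n)
  | succ m hnm ih =>
    exact (dist_triangle_max _ (a m) _).trans (max_le ((h m).trans (hε hnm)) ih)

lemma exists_dist_le_of_dist_succ_le [CompleteSpace X] {a : ℕ → X} {ε : ℕ → ℝ}
    (hε : Antitone ε) (hε0 : Tendsto ε atTop (𝓝 0))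
    (h : ∀ n, dist (a (n + 1)) (a n) ≤ ε n) : ∃ L, ∀ n, dist L (a n) ≤ ε n := by
  have hcauchy : CauchySeq a := by
    refine cauchySeq_of_le_tendsto_0 ε (fun n m N hn hm => ?_) hε0
    refine (dist_triangle_max _ (a N) _).trans (max_le ?_ ?_)
    · exact dist_le_of_dist_succ_le hε h hn
    · exact dist_comm (a m) _ ▸ dist_le_of_dist_succ_le hε h hm
  obtain ⟨L, hL⟩ := cauchySeq_tendsto_of_complete hcauchy
  refine ⟨L, fun n => le_of_tendsto (hL.dist tendsto_const_nhds) ?_⟩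
  filter_upwards [eventually_ge_atTop n] with m hm
  exact dist_le_of_dist_succ_le hε h hm

end IsUltrametricDist

variable {p k : ℕ} [Fact p.Prime]

lemma tendsto_inv_prime_pow_succ : Tendsto (fun m : ℕ => ((p : ℝ) ^ (m + 1))⁻¹) atTop (𝓝 0) :=
  tendsto_inv_atTop_zero.comp <| (tendsto_pow_atTop_atTop_of_one_lt
    (by exact_mod_cast (Fact.out : p.Prime).one_lt)).comp (tendsto_add_atTop_nat 1)

lemma antitone_inv_prime_pow_succ : Antitone (fun m : ℕ => ((p : ℝ) ^ (m + 1))⁻¹) :=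
  fun _ _ hmn => inv_anti₀ (pow_pos (by exact_mod_cast (Fact.out : p.Prime).pos) _) <|
    pow_le_pow_right₀ (by exact_mod_cast (Fact.out : p.Prime).one_le) (by omega)

lemma zpow_neg_natCast_add_sub_self_add_one (x : ℝ) (j m : ℕ) :
    x ^ (-(((j + m : ℕ) : ℤ) - j + 1)) = (x ^ (m + 1))⁻¹ := by
  rw [← zpow_natCast, ← zpow_neg]
  push_cast
  ring_nf

lemma FilCond.norm_le_inv_pow {μ : ℕ → ℤ_[p]} {j m : ℕ} (h : FilCond p k (j + m) μ)
    (hj : 1 ≤ j) : ‖μ (k + j)‖ ≤ ((p : ℝ) ^ (m + 1))⁻¹ := by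
  simpa only [zpow_neg_natCast_add_sub_self_add_one] using h.2 j hj (by omega)

theorem eq_zero_of_forall_filCond {μ : ℕ → ℤ_[p]} (h : ∀ n, FilCond p k n μ) : μ = 0 := by
  funext i
  obtain hi | ⟨j, hj, rfl⟩ : i ≤ k ∨ ∃ j, 1 ≤ j ∧ i = k + j :=
    (le_or_gt i k).imp_right fun hi => ⟨i - k, by omega, by omega⟩
  · exact (h 0).1 i hi
  · exact norm_le_zero_iff.1 <|
      ge_of_tendsto' tendsto_inv_prime_pow_succ fun m => (h (j + m)).norm_le_inv_pow hj

section Compatible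

variable {seq : ℕ → ℕ → ℤ_[p]} (hseq : ∀ n, FilCond p k n (fun i => seq (n + 1) i - seq n i))
include hseq

lemma apply_eq_of_compatible {i : ℕ} (hi : i ≤ k) (n : ℕ) : seq n i = seq 0 i := by
  induction n with
  | zero => rfl
  | succ n ih => rw [← ih, ← sub_eq_zero]; exact (hseq n).1 i hi

lemma exists_limit_of_compatible {j : ℕ} (hj : 1 ≤ j) :
    ∃ L, ∀ m, ‖L - seq (j + m) (k + j)‖ ≤ ((p : ℝ) ^ (m + 1))⁻¹ := by
  simpa only [dist_eq_norm] using
    IsUltrametricDist.exists_dist_le_of_dist_succ_le (a := fun m => seq (j + m) (k + j))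
      antitone_inv_prime_pow_succ tendsto_inv_prime_pow_succ
      fun m => by simpa only [dist_eq_norm, add_assoc] using (hseq (j + m)).norm_le_inv_pow hj

theorem exists_filCond_of_compatible :
    ∃ μ : ℕ → ℤ_[p], ∀ n, FilCond p k n (fun i => μ i - seq n i) := by
  choose L hL using fun j (hj : 1 ≤ j) => exists_limit_of_compatible hseq hj
  refine ⟨fun i => if h : k < i then L (i - k) (by omega) else seq 0 i, fun n => ⟨?_, ?_⟩⟩
  · intro i hi
    simp [Nat.not_lt.2 hi, apply_eq_of_compatible hseq hi n]
  · intro j hj hjn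
    obtain ⟨m, rfl⟩ := Nat.exists_eq_add_of_le hjn
    dsimp only
    rw [dif_pos (by omega : k < k + j), zpow_neg_natCast_add_sub_self_add_one]
    convert hL j hj m using 4
    exact Nat.add_sub_cancel_left k j

end Compatible

theorem stmt7_general (p k : ℕ) [Fact p.Prime] :
    (∀ μ : ℕ → ℤ_[p], (∀ n, FilCond p k n μ) → μ = 0) ∧
    (∀ seq : ℕ → (ℕ → ℤ_[p]),
      (∀ n, FilCond p k n (fun i => seq (n + 1) i - seq n i)) →
      ∃ μ : ℕ → ℤ_[p], ∀ n, FilCond p k n (fun i => μ i - seq n i)) :=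
  ⟨fun _ => eq_zero_of_forall_filCond, fun _ => exists_filCond_of_compatible⟩

/-- the natural map `D_k(ℤ_p) → lim_n D_k(ℤ_p)/F^n D_k(ℤ_p)` is an
isomorphism.  A distribution in `D_k(ℤ_p)` is (equivalently) its bounded moment sequence
`μ : ℕ → ℤ_p`.  Injectivity: if `μ ∈ F^n` for all `n` then `μ = 0`.  Surjectivity: any
compatible system of classes, i.e. a sequence of representatives `seq n` with
`seq (n+1) - seq n ∈ F^n`, comes from a single `μ` with `μ - seq n ∈ F^n` for all `n`. -/
theorem stmt7 (p k : ℕ) [Fact p.Prime] (hk : Even k) :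
    (∀ μ : ℕ → ℤ_[p], (∀ n, FilCond p k n μ) → μ = 0) ∧
    (∀ seq : ℕ → (ℕ → ℤ_[p]),
      (∀ n, FilCond p k n (fun i => seq (n + 1) i - seq n i)) →
      ∃ μ : ℕ → ℤ_[p], ∀ n, FilCond p k n (fun i => μ i - seq n i)) :=
  stmt7_general p k
end

section
/- Let ω be a bounded functional on the Tate algebra with all moments in Z_p (ω ∈ D_k(Z_p)), lying in F^n D_k(Z_p), and let α_j = [[p,j],[0,1]] for 0 ≤ j ≤ p−1. Then ω ·_k α_j^{−1} ∈ F^{n+1} D_k(Z_p). -/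
/-!
Write `S_i = ∑_{ν ≤ i} C(i,ν) p^ν j^{i-ν} ω(x^ν)`. The `ν`-th term has norm at most
`p^{-ν} ‖ω(x^ν)‖`, and it vanishes for `ν ≤ k`. For `ν = k + m` with `1 ≤ m ≤ n` the filtration
gives `p^{-(k+m)} p^{-(n-m+1)} = p^{-(k+n+1)}`, and for `m > n` integrality alone gives
`p^{-(k+m)} ≤ p^{-(k+n+1)}`. So every `S_i` has norm at most `p^{-(k+n+1)}`, and since
`k/2 ≤ k` the factor `p^{k/2}` from the normalisation is more than absorbed.
-/

open Finset

variable {p : ℕ} [Fact p.Prime]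

/-- The moments of `ω ·_k (p^{k/2} α_j⁻¹)` in terms of the moments `μ ν = ω(x^ν)`. -/
noncomputable def alphaInvMoment (j : ℕ) (μ : ℕ → ℚ_[p]) (i : ℕ) : ℚ_[p] :=
  ∑ ν ∈ range (i + 1), (i.choose ν : ℚ_[p]) * (p : ℚ_[p]) ^ ν * (j : ℚ_[p]) ^ (i - ν) * μ ν

lemma norm_natCast_mul_p_pow_mul_natCast_pow_mul_le (c ν j e : ℕ) (x : ℚ_[p]) :
    ‖(c : ℚ_[p]) * (p : ℚ_[p]) ^ ν * (j : ℚ_[p]) ^ e * x‖ ≤ (p : ℝ) ^ (-(ν : ℤ)) * ‖x‖ := by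
  have hc := IsUltrametricDist.norm_natCast_le_one ℚ_[p] c
  have hj := IsUltrametricDist.norm_natCast_le_one ℚ_[p] j
  rw [norm_mul, norm_mul, norm_mul, Padic.norm_p_pow, norm_pow]
  calc ‖(c : ℚ_[p])‖ * (p : ℝ) ^ (-(ν : ℤ)) * ‖(j : ℚ_[p])‖ ^ e * ‖x‖
      ≤ 1 * (p : ℝ) ^ (-(ν : ℤ)) * 1 ^ e * ‖x‖ := by gcongr
    _ = (p : ℝ) ^ (-(ν : ℤ)) * ‖x‖ := by ring

lemma norm_alphaInvMoment_le (j : ℕ) (μ : ℕ → ℚ_[p]) (i : ℕ) {B : ℝ} (hB : 0 ≤ B)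
    (h : ∀ ν ≤ i, (p : ℝ) ^ (-(ν : ℤ)) * ‖μ ν‖ ≤ B) : ‖alphaInvMoment j μ i‖ ≤ B :=
  IsUltrametricDist.norm_sum_le_of_forall_le_of_nonneg hB fun ν hν =>
    (norm_natCast_mul_p_pow_mul_natCast_pow_mul_le _ _ _ _ _).trans
      (h ν (Nat.lt_succ_iff.mp (mem_range.mp hν)))

lemma alphaInvMoment_eq_zero (j : ℕ) {μ : ℕ → ℚ_[p]} {k i : ℕ} (hμ : ∀ ν ≤ k, μ ν = 0)
    (hi : i ≤ k) : alphaInvMoment j μ i = 0 :=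
  sum_eq_zero fun ν hν => by
    rw [hμ ν ((Nat.lt_succ_iff.mp (mem_range.mp hν)).trans hi), mul_zero]

lemma norm_alphaInvMoment_le_of_filtration (j : ℕ) {μ : ℕ → ℚ_[p]} {k n : ℕ}
    (hμ1 : ∀ i, ‖μ i‖ ≤ 1) (hμ2 : ∀ i ≤ k, μ i = 0)
    (hμ3 : ∀ i, 1 ≤ i → i ≤ n → ‖μ (k + i)‖ ≤ (p : ℝ) ^ (-((n : ℤ) - i + 1))) (i : ℕ) :
    ‖alphaInvMoment j μ i‖ ≤ (p : ℝ) ^ (-(k : ℤ) - n - 1) := by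
  have hp : (1 : ℝ) ≤ p := Nat.one_le_cast.mpr (Fact.out : p.Prime).one_le
  refine norm_alphaInvMoment_le j μ i (by positivity) fun ν _ => ?_
  rcases le_or_gt ν k with hνk | hνk
  · rw [hμ2 ν hνk, norm_zero, mul_zero]
    positivity
  obtain ⟨m, rfl⟩ : ∃ m, ν = k + m := ⟨ν - k, by omega⟩
  rcases le_or_gt m n with hmn | hmn
  · calc (p : ℝ) ^ (-((k + m : ℕ) : ℤ)) * ‖μ (k + m)‖
        ≤ (p : ℝ) ^ (-((k + m : ℕ) : ℤ)) * (p : ℝ) ^ (-((n : ℤ) - m + 1)) := by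
          gcongr
          exact hμ3 m (by omega) hmn
      _ = (p : ℝ) ^ (-(k : ℤ) - n - 1) := by
          rw [← zpow_add₀ (by positivity)]
          congr 1
          push_cast
          ring
  · calc (p : ℝ) ^ (-((k + m : ℕ) : ℤ)) * ‖μ (k + m)‖
        ≤ (p : ℝ) ^ (-((k + m : ℕ) : ℤ)) * 1 := by gcongr; exact hμ1 _
      _ ≤ (p : ℝ) ^ (-(k : ℤ) - n - 1) := by
          rw [mul_one]
          exact zpow_le_zpow_right₀ hp (by omega)

lemma norm_inv_p_pow_mul_le {x : ℚ_[p]} {m : ℕ} {d e : ℤ} (hx : ‖x‖ ≤ (p : ℝ) ^ d)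
    (hde : m + d ≤ e) : ‖((p : ℚ_[p]) ^ m)⁻¹ * x‖ ≤ (p : ℝ) ^ e := by
  have hp : (1 : ℝ) ≤ p := Nat.one_le_cast.mpr (Fact.out : p.Prime).one_le
  rw [norm_mul, norm_inv, Padic.norm_p_pow, ← zpow_neg, neg_neg]
  calc (p : ℝ) ^ (m : ℤ) * ‖x‖ ≤ (p : ℝ) ^ (m : ℤ) * (p : ℝ) ^ d := by gcongr
    _ = (p : ℝ) ^ (m + d) := (zpow_add₀ (by positivity) _ _).symm
    _ ≤ (p : ℝ) ^ e := zpow_le_zpow_right₀ hp hde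

theorem stmt9_general (p k n : ℕ) [Fact p.Prime] (j : ℕ)
    (μ : ℕ → ℚ_[p])
    (hμ1 : ∀ i, ‖μ i‖ ≤ 1)
    (hμ2 : ∀ i ≤ k, μ i = 0)
    (hμ3 : ∀ i, 1 ≤ i → i ≤ n → ‖μ (k + i)‖ ≤ (p : ℝ) ^ (-((n : ℤ) - i + 1))) :
    -- the moments of ω ·_k α_j⁻¹ :
    (∀ i, ‖((p : ℚ_[p]) ^ (k / 2))⁻¹ *
        ∑ ν ∈ Finset.range (i + 1),
          (i.choose ν : ℚ_[p]) * (p : ℚ_[p]) ^ ν * (j : ℚ_[p]) ^ (i - ν) * μ ν‖ ≤ 1) ∧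
    (∀ i ≤ k, ((p : ℚ_[p]) ^ (k / 2))⁻¹ *
        ∑ ν ∈ Finset.range (i + 1),
          (i.choose ν : ℚ_[p]) * (p : ℚ_[p]) ^ ν * (j : ℚ_[p]) ^ (i - ν) * μ ν = 0) ∧
    (∀ i, 1 ≤ i → i ≤ n + 1 →
      ‖((p : ℚ_[p]) ^ (k / 2))⁻¹ *
        ∑ ν ∈ Finset.range (k + i + 1),
          ((k + i).choose ν : ℚ_[p]) * (p : ℚ_[p]) ^ ν * (j : ℚ_[p]) ^ (k + i - ν) * μ ν‖
        ≤ (p : ℝ) ^ (-(((n : ℤ) + 1) - i + 1))) := by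
  have hk : k / 2 ≤ k := Nat.div_le_self k 2
  have hS := norm_alphaInvMoment_le_of_filtration j hμ1 hμ2 hμ3
  refine ⟨fun i => ?_, fun i hi => ?_, fun i hi1 _ => ?_⟩
  · rw [← zpow_zero (p : ℝ)]
    exact norm_inv_p_pow_mul_le (hS i) (by omega)
  · change _ * alphaInvMoment j μ i = 0
    rw [alphaInvMoment_eq_zero j hμ2 hi, mul_zero]
  · exact norm_inv_p_pow_mul_le (hS (k + i)) (by omega)

/-- if `ω ∈ F^n D_k(ℤ_p)` (encoded by its moment sequence `μ i = ω(x^i)`),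
then `ω ·_k α_j⁻¹ ∈ F^{n+1} D_k(ℤ_p)` for `α_j = [[p,j],[0,1]]`, `0 ≤ j ≤ p-1`.
The dual action on moments is `(ω ·_k α_j⁻¹)(x^i) = p^{-k/2} ∑_{ν=0}^{i} C(i,ν) p^ν j^{i-ν} ω(x^ν)`. -/
theorem stmt9 (p k n : ℕ) [Fact p.Prime] (hk : Even k) (j : ℕ) (hj : j < p)
    (μ : ℕ → ℚ_[p])
    (hμ1 : ∀ i, ‖μ i‖ ≤ 1)
    (hμ2 : ∀ i ≤ k, μ i = 0)
    (hμ3 : ∀ i, 1 ≤ i → i ≤ n → ‖μ (k + i)‖ ≤ (p : ℝ) ^ (-((n : ℤ) - i + 1))) :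
    -- the moments of ω ·_k α_j⁻¹ :
    (∀ i, ‖((p : ℚ_[p]) ^ (k / 2))⁻¹ *
        ∑ ν ∈ Finset.range (i + 1),
          (i.choose ν : ℚ_[p]) * (p : ℚ_[p]) ^ ν * (j : ℚ_[p]) ^ (i - ν) * μ ν‖ ≤ 1) ∧
    (∀ i ≤ k, ((p : ℚ_[p]) ^ (k / 2))⁻¹ *
        ∑ ν ∈ Finset.range (i + 1),
          (i.choose ν : ℚ_[p]) * (p : ℚ_[p]) ^ ν * (j : ℚ_[p]) ^ (i - ν) * μ ν = 0) ∧
    (∀ i, 1 ≤ i → i ≤ n + 1 →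
      ‖((p : ℚ_[p]) ^ (k / 2))⁻¹ *
        ∑ ν ∈ Finset.range (k + i + 1),
          ((k + i).choose ν : ℚ_[p]) * (p : ℚ_[p]) ^ ν * (j : ℚ_[p]) ^ (k + i - ν) * μ ν‖
        ≤ (p : ℝ) ^ (-(((n : ℤ) + 1) - i + 1))) :=
  stmt9_general p k n j μ hμ1 hμ2 hμ3
end

section
/- Define V_k'(Z_p) = {ω ∈ V_k(Z_p) : ω(x^i) ∈ p^{k/2 − i} Z_p for all 0 ≤ i ≤ k/2}. Then V_k'(Z_p) is stable under the right action of Γ_0(pZ_p) on V_k = Hom(P_k, Q_p). -/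
/-!
Put `ε = p⁻¹`. In `σ ·_k x^i = det(σ)^{-k/2} (dx - b)^i (a - cx)^{k-i}` every coefficient is
integral, the factor `(dx - b)^i` has degree `i`, and every further power of `x` comes with a
factor `c ∈ pℤ_p`; hence the coefficient of `x^ν` has norm at most `ε^(ν - i)`. Pairing it with a
moment `ω(x^ν)` of norm at most `ε^(k/2 - ν)` gives a term of norm at most
`ε^((ν - i) + (k/2 - ν)) ≤ ε^(k/2 - i)`, and the ultrametric inequality bounds the whole sum.
-/

open Polynomial

namespace Polynomial

variable {R : Type*} [NormedRing R]

/-- `j - m` is truncated subtraction: coefficients of index at most `m` need only have norm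
at most `1`. -/
def CoeffDecay (ε : ℝ) (m : ℕ) (u : R[X]) : Prop :=
  ∀ j, ‖u.coeff j‖ ≤ ε ^ (j - m)

variable {ε : ℝ} {m n : ℕ} {u v : R[X]}

theorem coeffDecay_C (hε : 0 ≤ ε) {r : R} (hr : ‖r‖ ≤ 1) : CoeffDecay ε m (C r) := by
  intro j
  rcases eq_or_ne j 0 with rfl | hj
  · simpa using hr
  · simpa [coeff_C, hj] using pow_nonneg hε _

theorem coeffDecay_C_mul_X (hε : 0 ≤ ε) {r : R} (hr : ‖r‖ ≤ ε ^ (1 - m)) :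
    CoeffDecay ε m (C r * X) := by
  intro j
  rcases eq_or_ne j 1 with rfl | hj
  · simpa using hr
  · rw [coeff_C_mul_X, if_neg hj, norm_zero]
    exact pow_nonneg hε _

variable [IsUltrametricDist R]

theorem CoeffDecay.sub (hu : CoeffDecay ε m u) (hv : CoeffDecay ε m v) :
    CoeffDecay ε m (u - v) := fun j => by
  rw [coeff_sub, sub_eq_add_neg]
  refine (IsUltrametricDist.norm_add_le_max _ _).trans (max_le (hu j) ?_)
  simpa using hv j

theorem CoeffDecay.mul (hε : 0 ≤ ε) (hε1 : ε ≤ 1) (hu : CoeffDecay ε m u)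
    (hv : CoeffDecay ε n v) : CoeffDecay ε (m + n) (u * v) := by
  intro j
  rw [coeff_mul]
  refine IsUltrametricDist.norm_sum_le_of_forall_le_of_nonneg (pow_nonneg hε _) fun x hx => ?_
  rw [Finset.HasAntidiagonal.mem_antidiagonal] at hx
  calc ‖u.coeff x.1 * v.coeff x.2‖ ≤ ‖u.coeff x.1‖ * ‖v.coeff x.2‖ := norm_mul_le _ _
    _ ≤ ε ^ (x.1 - m) * ε ^ (x.2 - n) :=
        mul_le_mul (hu _) (hv _) (norm_nonneg _) (pow_nonneg hε _)
    _ = ε ^ ((x.1 - m) + (x.2 - n)) := (pow_add ε _ _).symm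
    _ ≤ ε ^ (j - (m + n)) := pow_le_pow_of_le_one hε hε1 (by omega)

theorem CoeffDecay.pow [NormOneClass R] (hε : 0 ≤ ε) (hε1 : ε ≤ 1) (hu : CoeffDecay ε m u)
    (n : ℕ) :
    CoeffDecay ε (n * m) (u ^ n) := by
  induction n with
  | zero => simpa using coeffDecay_C (m := 0) hε (norm_one (α := R)).le
  | succ n ih => simpa [pow_succ, add_mul] using ih.mul hε hε1 hu

theorem CoeffDecay.norm_sum_coeff_mul_le (hε : 0 ≤ ε) (hε1 : ε ≤ 1) {i h : ℕ}
    (hu : CoeffDecay ε i u) (s : Finset ℕ) {μ : ℕ → R} (hμ : ∀ ν ∈ s, ‖μ ν‖ ≤ ε ^ (h - ν)) :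
    ‖∑ ν ∈ s, u.coeff ν * μ ν‖ ≤ ε ^ (h - i) := by
  refine IsUltrametricDist.norm_sum_le_of_forall_le_of_nonneg (pow_nonneg hε _) fun ν hν => ?_
  calc ‖u.coeff ν * μ ν‖ ≤ ‖u.coeff ν‖ * ‖μ ν‖ := norm_mul_le _ _
    _ ≤ ε ^ (ν - i) * ε ^ (h - ν) :=
        mul_le_mul (hu ν) (hμ ν hν) (norm_nonneg _) (pow_nonneg hε _)
    _ = ε ^ ((ν - i) + (h - ν)) := (pow_add ε _ _).symm
    _ ≤ ε ^ (h - i) := pow_le_pow_of_le_one hε hε1 (by omega)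

end Polynomial

theorem coeffDecay_gamma0_action {p : ℕ} [Fact p.Prime] {a b c d : ℚ_[p]} (ha : ‖a‖ ≤ 1)
    (hb : ‖b‖ ≤ 1) (hd : ‖d‖ ≤ 1) (hdet : ‖a * d - b * c‖ = 1) (hpc : ‖c‖ ≤ (p : ℝ)⁻¹)
    (h i j : ℕ) :
    CoeffDecay (p : ℝ)⁻¹ i (C (((a * d - b * c)⁻¹) ^ h) * (C d * X - C b) ^ i *
      (C a - C c * X) ^ j) := by
  have hε : (0 : ℝ) ≤ (p : ℝ)⁻¹ := by positivity
  have hε1 : (p : ℝ)⁻¹ ≤ 1 := inv_le_one_of_one_le₀ (by exact_mod_cast (Fact.out : p.Prime).one_le)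
  have hdet_pow : ‖((a * d - b * c)⁻¹) ^ h‖ ≤ 1 := by simp [hdet]
  have hdX_sub_b : CoeffDecay (p : ℝ)⁻¹ 1 (C d * X - C b) :=
    (coeffDecay_C_mul_X hε (by simpa using hd)).sub (coeffDecay_C hε hb)
  have ha_sub_cX : CoeffDecay (p : ℝ)⁻¹ 0 (C a - C c * X) :=
    (coeffDecay_C hε ha).sub (coeffDecay_C_mul_X hε (by simpa using hpc))
  simpa using ((coeffDecay_C (m := 0) hε hdet_pow).mul hε hε1 (hdX_sub_b.pow hε hε1 i)).mul hε hε1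
    (ha_sub_cX.pow hε hε1 j)

theorem stmt10_general (p k : ℕ) [Fact p.Prime]
    (a b c d : ℚ_[p]) (ha : ‖a‖ ≤ 1) (hb : ‖b‖ ≤ 1) (hd : ‖d‖ ≤ 1)
    (hdet : ‖a * d - b * c‖ = 1) (hpc : ‖c‖ ≤ (p : ℝ)⁻¹)
    (μ : ℕ → ℚ_[p])
    (hμ1 : ∀ i ≤ k, ‖μ i‖ ≤ 1)
    (hμ2 : ∀ i ≤ k / 2, ‖μ i‖ ≤ (p : ℝ) ^ (-((k / 2 - i : ℕ) : ℤ))) :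
    -- the moments of ω · σ :
    (∀ i ≤ k, ‖∑ ν ∈ Finset.range (k + 1),
        (Polynomial.C (((a * d - b * c)⁻¹) ^ (k / 2)) *
          (Polynomial.C d * Polynomial.X - Polynomial.C b) ^ i *
          (Polynomial.C a - Polynomial.C c * Polynomial.X) ^ (k - i)).coeff ν * μ ν‖ ≤ 1) ∧
    (∀ i ≤ k / 2, ‖∑ ν ∈ Finset.range (k + 1),
        (Polynomial.C (((a * d - b * c)⁻¹) ^ (k / 2)) *
          (Polynomial.C d * Polynomial.X - Polynomial.C b) ^ i *
          (Polynomial.C a - Polynomial.C c * Polynomial.X) ^ (k - i)).coeff ν * μ ν‖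
      ≤ (p : ℝ) ^ (-((k / 2 - i : ℕ) : ℤ))) := by
  have hε : (0 : ℝ) ≤ (p : ℝ)⁻¹ := by positivity
  have hε1 : (p : ℝ)⁻¹ ≤ 1 := inv_le_one_of_one_le₀ (by exact_mod_cast (Fact.out : p.Prime).one_le)
  have hzpow (n : ℕ) : (p : ℝ) ^ (-(n : ℤ)) = (p : ℝ)⁻¹ ^ n := by simp [zpow_neg, inv_pow]
  have hdecay := coeffDecay_gamma0_action ha hb hd hdet hpc (k / 2)
  refine ⟨fun i _ => ?_, fun i _ => ?_⟩
  · simpa using (hdecay i (k - i)).norm_sum_coeff_mul_le hε hε1 (h := 0) _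
      fun ν hν => by simpa using hμ1 ν (Finset.mem_range_succ_iff.mp hν)
  · rw [hzpow]
    refine (hdecay i (k - i)).norm_sum_coeff_mul_le hε hε1 _ fun ν hν => ?_
    rcases le_or_gt ν (k / 2) with hνh | hνh
    · simpa [hzpow] using hμ2 ν hνh
    · simpa [Nat.sub_eq_zero_of_le hνh.le] using hμ1 ν (Finset.mem_range_succ_iff.mp hν)

/-- `V_k'(ℤ_p) = {ω ∈ V_k(ℤ_p) : ω(x^i) ∈ p^{k/2-i}ℤ_p for i ≤ k/2}` is stable
under the right action of `Γ₀(pℤ_p)`.  Here `ω ∈ V_k = Hom(P_k, ℚ_p)` is encoded by its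
moments `μ i = ω(x^i)` (`0 ≤ i ≤ k`), and the action is
`(ω · σ)(x^i) = ω(σ ·_k x^i)` where `σ ·_k x^i = det(σ)^{-k/2} (dx-b)^i (a-cx)^{k-i}`. -/
theorem stmt10 (p k : ℕ) [Fact p.Prime] (hk : Even k)
    (a b c d : ℚ_[p]) (ha : ‖a‖ ≤ 1) (hb : ‖b‖ ≤ 1) (hcc : ‖c‖ ≤ 1) (hd : ‖d‖ ≤ 1)
    (hdet : ‖a * d - b * c‖ = 1) (hpc : ‖c‖ ≤ (p : ℝ)⁻¹)
    (μ : ℕ → ℚ_[p])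
    (hμ1 : ∀ i ≤ k, ‖μ i‖ ≤ 1)
    (hμ2 : ∀ i ≤ k / 2, ‖μ i‖ ≤ (p : ℝ) ^ (-((k / 2 - i : ℕ) : ℤ))) :
    -- the moments of ω · σ :
    (∀ i ≤ k, ‖∑ ν ∈ Finset.range (k + 1),
        (Polynomial.C (((a * d - b * c)⁻¹) ^ (k / 2)) *
          (Polynomial.C d * Polynomial.X - Polynomial.C b) ^ i *
          (Polynomial.C a - Polynomial.C c * Polynomial.X) ^ (k - i)).coeff ν * μ ν‖ ≤ 1) ∧
    (∀ i ≤ k / 2, ‖∑ ν ∈ Finset.range (k + 1),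
        (Polynomial.C (((a * d - b * c)⁻¹) ^ (k / 2)) *
          (Polynomial.C d * Polynomial.X - Polynomial.C b) ^ i *
          (Polynomial.C a - Polynomial.C c * Polynomial.X) ^ (k - i)).coeff ν * μ ν‖
      ≤ (p : ℝ) ^ (-((k / 2 - i : ℕ) : ℤ))) :=
  stmt10_general p k a b c d ha hb hd hdet hpc μ hμ1 hμ2
end

section
/- Let ω ∈ D_k(Z_p) be such that its image π(ω) ∈ V_k lies in V_k'(Z_p), i.e. ω(x^i) ∈ p^{k/2−i} Z_p for 0 ≤ i ≤ k/2 and ω(x^i) ∈ Z_p for all i. Then for each j = 0, …, p−1, the distribution ω ·_k α_j^{−1} (with α_j = [[p,j],[0,1]]) again lies in D_k(Z_p), i.e. all its moments are in Z_p. -/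
/-!
Write `m = k / 2`. In the `ν`-th term of the sum, the binomial coefficient and `j ^ (i - ν)`
are integers, and `p ^ ν μ_ν` has norm at most `p ^ (-m)`: for `ν ≤ m` the hypothesis
`μ_ν ∈ p ^ (m - ν) ℤ_p` supplies the missing powers of `p`, and for `ν > m` the factor `p ^ ν`
alone does. By the ultrametric inequality the whole sum lies in `p ^ m ℤ_p`, which the
prefactor `p ^ (-m)` brings back into `ℤ_p`.
-/

namespace Padic

variable {p : ℕ} [Fact p.Prime]

lemma norm_p_pow_mul_le {m : ℕ} {μ : ℕ → ℚ_[p]} (hμ1 : ∀ i, ‖μ i‖ ≤ 1)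
    (hμ2 : ∀ i ≤ m, ‖μ i‖ ≤ (p : ℝ) ^ (-((m - i : ℕ) : ℤ))) (ν : ℕ) :
    ‖(p : ℚ_[p]) ^ ν * μ ν‖ ≤ (p : ℝ) ^ (-(m : ℤ)) := by
  have hp : (1 : ℝ) ≤ p := Nat.one_le_cast.2 (Fact.out : p.Prime).one_lt.le
  rw [norm_mul, norm_p_pow]
  rcases le_or_gt ν m with hν | hν
  · calc (p : ℝ) ^ (-(ν : ℤ)) * ‖μ ν‖
        ≤ (p : ℝ) ^ (-(ν : ℤ)) * (p : ℝ) ^ (-((m - ν : ℕ) : ℤ)) := by gcongr; exact hμ2 ν hν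
      _ = (p : ℝ) ^ (-(m : ℤ)) := by
        rw [← zpow_add₀ (by positivity), Nat.cast_sub hν]
        ring_nf
  · calc (p : ℝ) ^ (-(ν : ℤ)) * ‖μ ν‖ ≤ (p : ℝ) ^ (-(ν : ℤ)) :=
          mul_le_of_le_one_right (by positivity) (hμ1 ν)
      _ ≤ (p : ℝ) ^ (-(m : ℤ)) := zpow_le_zpow_right₀ hp (by omega)

lemma norm_sum_choose_mul_p_pow_mul_le {m : ℕ} {μ : ℕ → ℚ_[p]} (hμ1 : ∀ i, ‖μ i‖ ≤ 1)
    (hμ2 : ∀ i ≤ m, ‖μ i‖ ≤ (p : ℝ) ^ (-((m - i : ℕ) : ℤ))) (i j : ℕ) :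
    ‖∑ ν ∈ Finset.range (i + 1),
        (i.choose ν : ℚ_[p]) * (p : ℚ_[p]) ^ ν * (j : ℚ_[p]) ^ (i - ν) * μ ν‖
      ≤ (p : ℝ) ^ (-(m : ℤ)) := by
  refine IsUltrametricDist.norm_sum_le_of_forall_le_of_nonneg (by positivity) fun ν _ => ?_
  have hterm : (i.choose ν : ℚ_[p]) * (p : ℚ_[p]) ^ ν * (j : ℚ_[p]) ^ (i - ν) * μ ν
      = ((i.choose ν * j ^ (i - ν) : ℕ) : ℚ_[p]) * ((p : ℚ_[p]) ^ ν * μ ν) := by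
    push_cast; ring
  rw [hterm, norm_mul]
  exact (mul_le_of_le_one_left (norm_nonneg _) (IsUltrametricDist.norm_natCast_le_one _ _)).trans
    (norm_p_pow_mul_le hμ1 hμ2 ν)

end Padic

theorem stmt11_general (p k : ℕ) [Fact p.Prime] (j : ℕ)
    (μ : ℕ → ℚ_[p])
    (hμ1 : ∀ i, ‖μ i‖ ≤ 1)
    (hμ2 : ∀ i ≤ k / 2, ‖μ i‖ ≤ (p : ℝ) ^ (-((k / 2 - i : ℕ) : ℤ))) :
    ∀ i, ‖((p : ℚ_[p]) ^ (k / 2))⁻¹ *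
        ∑ ν ∈ Finset.range (i + 1),
          (i.choose ν : ℚ_[p]) * (p : ℚ_[p]) ^ ν * (j : ℚ_[p]) ^ (i - ν) * μ ν‖ ≤ 1 := by
  intro i
  rw [norm_mul, norm_inv, Padic.norm_p_pow, inv_mul_le_one₀ (zpow_pos (mod_cast (Fact.out : p.Prime).pos) _)]
  exact Padic.norm_sum_choose_mul_p_pow_mul_le hμ1 hμ2 i j

/-- if `ω ∈ D_k(ℤ_p)` has specialization in `V_k'(ℤ_p)`, i.e. its moments
`μ i = ω(x^i)` satisfy `μ i ∈ p^{k/2-i} ℤ_p` for `i ≤ k/2` and `μ i ∈ ℤ_p` for all `i`,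
then for each `0 ≤ j ≤ p-1` all moments of `ω ·_k α_j⁻¹` (with `α_j = [[p,j],[0,1]]`,
so `(ω ·_k α_j⁻¹)(x^i) = p^{-k/2} ∑_{ν≤i} C(i,ν) p^ν j^{i-ν} μ ν`) lie in ℤ_p. -/
theorem stmt11 (p k : ℕ) [Fact p.Prime] (hk : Even k) (j : ℕ) (hj : j < p)
    (μ : ℕ → ℚ_[p])
    (hμ1 : ∀ i, ‖μ i‖ ≤ 1)
    (hμ2 : ∀ i ≤ k / 2, ‖μ i‖ ≤ (p : ℝ) ^ (-((k / 2 - i : ℕ) : ℤ))) :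
    ∀ i, ‖((p : ℚ_[p]) ^ (k / 2))⁻¹ *
        ∑ ν ∈ Finset.range (i + 1),
          (i.choose ν : ℚ_[p]) * (p : ℚ_[p]) ^ ν * (j : ℚ_[p]) ^ (i - ν) * μ ν‖ ≤ 1 :=
  stmt11_general p k j μ hμ1 hμ2
end

section
/- Let Γ act on the Bruhat-Tits tree T, let V be a Q_p-vector space with left Γ-action, and let c : T_1 → V be a Γ-equivariant harmonic cocycle, i.e. c(γe) = γ·c(e), c(ē) = −c(e), and Σ_{s(e)=v} c(e) = 0 for each vertex v. Fix a vertex v_0 and define ψ(c) : Γ → V by ψ(c)(γ) = Σ_{e : v_0 → γv_0} c(e), the sum over the edges on the geodesic path from v_0 to γv_0. Then ψ(c) is a 1-cocycle: ψ(c)(γδ) = ψ(c)(γ) + γ·ψ(c)(δ) for all γ, δ ∈ Γ. -/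
/-!
Along a walk in a tree, the sums of an antisymmetric edge function `c` telescope: writing
`g v` for the sum of `c` along the geodesic from `v₀` to `v`, every walk from `a` to `b` has
sum `g b - g a`, since a single edge `u → v` changes `g` by `c u v` (the geodesic to `v` either
extends the one to `u` by that edge or, backtracking, the other way round). Applying this to
the `γ`-translate of the geodesic from `v₀` to `δ v₀`, whose sum is `γ • ψ(δ)` by equivariance,
gives `γ • ψ(δ) = ψ(γδ) - ψ(γ)`.
-/

def walkSum {Vt W : Type*} [AddCommGroup W] {G : SimpleGraph Vt}
    (c : Vt → Vt → W) : {u v : Vt} → G.Walk u v → W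
  | _, _, SimpleGraph.Walk.nil => 0
  | u, _, SimpleGraph.Walk.cons (v := w) _ q => c u w + walkSum c q

section WalkSum

open SimpleGraph

variable {V V' W : Type*} [AddCommGroup W] {G : SimpleGraph V} {G' : SimpleGraph V'}

lemma walkSum_append (c : V → V → W) {u v w : V} (p : G.Walk u v) (q : G.Walk v w) :
    walkSum c (p.append q) = walkSum c p + walkSum c q := by
  induction p with
  | nil => simp [walkSum]
  | cons h p ih => simp [walkSum, ih, add_assoc]

lemma walkSum_concat (c : V → V → W) {u v w : V} (p : G.Walk u v) (h : G.Adj v w) :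
    walkSum c (p.concat h) = walkSum c p + c v w := by
  simp [Walk.concat_eq_append, walkSum_append, walkSum]

lemma walkSum_map (f : G →g G') (c : V' → V' → W) {u v : V} (p : G.Walk u v) :
    walkSum c (p.map f) = walkSum (fun x y => c (f x) (f y)) p := by
  induction p with
  | nil => rfl
  | cons h p ih => simp only [Walk.map_cons, walkSum, ih]

lemma walkSum_smul {M : Type*} [Monoid M] [DistribMulAction M W] (m : M) (c : V → V → W)
    {u v : V} (p : G.Walk u v) :
    walkSum (fun x y => m • c x y) p = m • walkSum c p := by
  induction p with
  | nil => simp [walkSum]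
  | cons h p ih => simp only [walkSum, ih, smul_add]

end WalkSum

namespace SimpleGraph

variable {V W : Type*} [AddCommGroup W] {G : SimpleGraph V}

variable (hG : G.IsAcyclic) {c : V → V → W} (hc : ∀ u v, c u v = -c v u)
include hG hc

lemma IsAcyclic.walkSum_eq_add_of_adj {a u v : V} {p : G.Walk a u} {q : G.Walk a v}
    (hp : p.IsPath) (hq : q.IsPath) (h : G.Adj u v) :
    walkSum c q = walkSum c p + c u v := by
  by_cases hu : u ∈ q.support
  · rw [hG.path_concat hp hq h hu, walkSum_concat]
  · have hv : v ∈ p.support := hG.mem_support_of_ne_mem_support_of_adj_of_isPath hp hq h hu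
    rw [hG.path_concat hq hp h.symm hv, walkSum_concat, hc v u]
    abel

lemma IsAcyclic.walkSum_eq_sub {v₀ : V} (P : ∀ v, G.Walk v₀ v) (hP : ∀ v, (P v).IsPath)
    {a b : V} (q : G.Walk a b) :
    walkSum c q = walkSum c (P b) - walkSum c (P a) := by
  induction q with
  | nil => simp [walkSum]
  | cons h q ih =>
    rw [walkSum, ih, hG.walkSum_eq_add_of_adj hc (hP _) (hP _) h]
    abel

end SimpleGraph

theorem stmt14_general {Vt : Type*} {Γ : Type*} [Group Γ]
    [MulAction Γ Vt] {W : Type*} [AddCommGroup W]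
    [DistribMulAction Γ W]
    (G : SimpleGraph Vt) (hG : G.IsTree)
    (hadj : ∀ (γ : Γ) (u v : Vt), G.Adj u v ↔ G.Adj (γ • u) (γ • v))
    (c : Vt → Vt → W)
    (hskew : ∀ u v : Vt, c u v = - c v u)
    (hequiv : ∀ (γ : Γ) (u v : Vt), c (γ • u) (γ • v) = γ • c u v)
    (v₀ : Vt) (P : ∀ u v : Vt, G.Walk u v) (hP : ∀ u v : Vt, (P u v).IsPath) :
    ∀ γ δ : Γ,
      walkSum c (P v₀ ((γ * δ) • v₀)) =
        walkSum c (P v₀ (γ • v₀)) + γ • walkSum c (P v₀ (δ • v₀)) := by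
  intro γ δ
  let φ : G →g G := ⟨(γ • ·), (hadj γ _ _).mp⟩
  have htranslate : γ • walkSum c (P v₀ (δ • v₀)) =
      walkSum c (P v₀ (γ • δ • v₀)) - walkSum c (P v₀ (γ • v₀)) := by
    have := hG.isAcyclic.walkSum_eq_sub hskew (P v₀) (hP v₀) ((P v₀ (δ • v₀)).map φ)
    simpa only [walkSum_map, φ, RelHom.coeFn_mk, hequiv, walkSum_smul] using this
  rw [mul_smul, htranslate]
  abel

/-- let `Γ` act on a tree `G` (preserving adjacency) and linearly on a
`ℚ_p`-vector space `W`, and let `c` be a `Γ`-equivariant harmonic cocycle: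
`c(γe) = γ·c(e)`, `c(ē) = -c(e)`, supported on edges, with `∑_{s(e)=v} c(e) = 0`.
Fix a base vertex `v₀` and a choice `P` of (geodesic) paths between vertices.  Then
`ψ(c) : γ ↦ ∑_{e : v₀ → γv₀} c(e)` is a 1-cocycle:
`ψ(c)(γδ) = ψ(c)(γ) + γ·ψ(c)(δ)`. -/
theorem stmt14 (p : ℕ) [Fact p.Prime] {Vt : Type*} {Γ : Type*} [Group Γ]
    [MulAction Γ Vt] {W : Type*} [AddCommGroup W] [Module ℚ_[p] W]
    [DistribMulAction Γ W]
    (G : SimpleGraph Vt) (hG : G.IsTree)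
    (hadj : ∀ (γ : Γ) (u v : Vt), G.Adj u v ↔ G.Adj (γ • u) (γ • v))
    (c : Vt → Vt → W)
    (hskew : ∀ u v : Vt, c u v = - c v u)
    (hequiv : ∀ (γ : Γ) (u v : Vt), c (γ • u) (γ • v) = γ • c u v)
    (hsupp : ∀ u v : Vt, ¬ G.Adj u v → c u v = 0)
    (hfin : ∀ v : Vt, {w : Vt | c v w ≠ 0}.Finite)
    (hharm : ∀ v : Vt, ∑ᶠ w : Vt, c v w = 0)
    (v₀ : Vt) (P : ∀ u v : Vt, G.Walk u v) (hP : ∀ u v : Vt, (P u v).IsPath) :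
    ∀ γ δ : Γ,
      walkSum c (P v₀ ((γ * δ) • v₀)) =
        walkSum c (P v₀ (γ • v₀)) + γ • walkSum c (P v₀ (δ • v₀)) :=
  stmt14_general G hG hadj c hskew hequiv v₀ P hP
end

section
/- The restriction of the specialization map ρ from rigid-analytic automorphic forms to p-adic automorphic forms of weight k is injective on the p^{k/2}-eigenspace of U_p: if Φ ∈ A_k(Γ, Z_p) satisfies U_p Φ = p^{k/2} Φ and all moments Φ(g)(x^i) vanish for 0 ≤ i ≤ k and all g, then Φ = 0. -/
/-- The matrices `α_j = [[p, j], [0, 1]]`. -/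
noncomputable def alphaMat18 (p : ℕ) [Fact p.Prime] (j : ℕ) :
    Matrix (Fin 2) (Fin 2) ℚ_[p] :=
  !![(p : ℚ_[p]), (j : ℚ_[p]); 0, 1]

/-! The `p`-divisibility of the moments of index `> k` is measured by the filtration `F^n`: the
`(k + m + 1)`-st moment has norm at most `p ^ (m - n)`. In the moment formula for `U_p`, a
moment of index `ν > k` is multiplied by `p ^ ν`, so for a form with vanishing moments of index
`≤ k` the operator `p ^ (-e) U_p`, `e ≤ k`, maps `F^n` into `F^(n+1)`. An eigenform with
eigenvalue `p ^ (k / 2)` therefore lies in every `F^n`, and `⋂ F^n = 0`. -/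

namespace MomentFiltration

open Finset

variable {p : ℕ} [Fact p.Prime]

/-- The filtration step `F^n D_k`, on the moment sequence `x i = μ(x^i)`. -/
def MemFiltration (k n : ℕ) (x : ℕ → ℚ_[p]) : Prop :=
  (∀ i ≤ k, x i = 0) ∧ ∀ m, ‖x (k + m + 1)‖ ≤ (p : ℝ) ^ ((m : ℤ) - n)

lemma one_lt_prime_cast : (1 : ℝ) < p := by
  exact_mod_cast (Fact.out : p.Prime).one_lt

lemma memFiltration_zero {k : ℕ} {x : ℕ → ℚ_[p]} (hlow : ∀ i ≤ k, x i = 0)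
    (hint : ∀ i, ‖x i‖ ≤ 1) : MemFiltration k 0 x :=
  ⟨hlow, fun m => (hint _).trans <| by
    simpa using one_le_pow₀ (M₀ := ℝ) (n := m) one_lt_prime_cast.le⟩

lemma eq_zero_of_forall_memFiltration {k : ℕ} {x : ℕ → ℚ_[p]}
    (hx : ∀ n, MemFiltration k n x) (i : ℕ) : x i = 0 := by
  rcases le_or_gt i k with hle | hgt
  · exact (hx 0).1 i hle
  obtain ⟨m, rfl⟩ : ∃ m, i = k + m + 1 := ⟨i - k - 1, by omega⟩
  have hp : (0 : ℝ) < p := one_pos.trans one_lt_prime_cast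
  have hdecay : Filter.Tendsto (fun n : ℕ => (p : ℝ) ^ ((m : ℤ) - n)) Filter.atTop (nhds 0) := by
    simpa [zpow_sub₀ hp.ne', div_eq_mul_inv] using
      (tendsto_pow_atTop_nhds_zero_of_lt_one (by positivity)
        (inv_lt_one_of_one_lt₀ one_lt_prime_cast)).const_mul ((p : ℝ) ^ m)
  exact norm_le_zero_iff.mp <| ge_of_tendsto' hdecay fun n => (hx n).2 m

lemma norm_natCast_mul_prime_pow_mul_pow_mul_le (c ν j e : ℕ) (z : ℚ_[p]) :
    ‖(c : ℚ_[p]) * (p : ℚ_[p]) ^ ν * (j : ℚ_[p]) ^ e * z‖ ≤ (p : ℝ) ^ (-ν : ℤ) * ‖z‖ := by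
  rw [norm_mul, norm_mul, norm_mul, Padic.norm_p_pow, norm_pow]
  have hc := IsUltrametricDist.norm_natCast_le_one ℚ_[p] c
  have hj := pow_le_one₀ (norm_nonneg _) (IsUltrametricDist.norm_natCast_le_one ℚ_[p] j) (n := e)
  calc ‖(c : ℚ_[p])‖ * (p : ℝ) ^ (-ν : ℤ) * ‖(j : ℚ_[p])‖ ^ e * ‖z‖
      ≤ 1 * (p : ℝ) ^ (-ν : ℤ) * 1 * ‖z‖ := by gcongr
    _ = (p : ℝ) ^ (-ν : ℤ) * ‖z‖ := by ring

lemma norm_sum_choose_mul_le {k n : ℕ} {y : ℕ → ℚ_[p]} (hy : MemFiltration k n y) (i j : ℕ) :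
    ‖∑ ν ∈ range (i + 1), (i.choose ν : ℚ_[p]) * (p : ℚ_[p]) ^ ν * (j : ℚ_[p]) ^ (i - ν) * y ν‖
      ≤ (p : ℝ) ^ (-(k : ℤ) - 1 - n) := by
  have hp : (0 : ℝ) < p := one_pos.trans one_lt_prime_cast
  refine IsUltrametricDist.norm_sum_le_of_forall_le_of_nonneg (by positivity) fun ν _ => ?_
  rcases le_or_gt ν k with hle | hgt
  · rw [hy.1 ν hle, mul_zero, norm_zero]
    positivity
  obtain ⟨μ, rfl⟩ : ∃ μ, ν = k + μ + 1 := ⟨ν - k - 1, by omega⟩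
  calc _ ≤ (p : ℝ) ^ (-(k + μ + 1 : ℕ) : ℤ) * (p : ℝ) ^ ((μ : ℤ) - n) :=
        (norm_natCast_mul_prime_pow_mul_pow_mul_le _ _ _ _ _).trans (by gcongr; exact hy.2 μ)
    _ = (p : ℝ) ^ (-(k : ℤ) - 1 - n) := by
        rw [← zpow_add₀ hp.ne']
        push_cast
        ring_nf

lemma memFiltration_succ_of_eq_sum {k n e : ℕ} (he : e ≤ k) {x : ℕ → ℚ_[p]}
    {y : ℕ → ℕ → ℚ_[p]} (hlow : ∀ i ≤ k, x i = 0) (hy : ∀ j, MemFiltration k n (y j))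
    (hx : ∀ i, (p : ℚ_[p]) ^ e * x i =
      ∑ j ∈ range p, ∑ ν ∈ range (i + 1),
        (i.choose ν : ℚ_[p]) * (p : ℚ_[p]) ^ ν * (j : ℚ_[p]) ^ (i - ν) * y j ν) :
    MemFiltration k (n + 1) x := by
  refine ⟨hlow, fun m => ?_⟩
  have hp : (0 : ℝ) < p := one_pos.trans one_lt_prime_cast
  have hsum : (p : ℝ) ^ (-(e : ℤ)) * ‖x (k + m + 1)‖ ≤ (p : ℝ) ^ (-(k : ℤ) - 1 - n) := by
    rw [← Padic.norm_p_pow, ← norm_mul, hx]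
    exact IsUltrametricDist.norm_sum_le_of_forall_le_of_nonneg (by positivity)
      fun j _ => norm_sum_choose_mul_le (hy j) _ _
  calc ‖x (k + m + 1)‖ ≤ (p : ℝ) ^ (-(k : ℤ) - 1 - n) / (p : ℝ) ^ (-(e : ℤ)) :=
        (le_div_iff₀' (by positivity)).mpr hsum
    _ = (p : ℝ) ^ ((e : ℤ) - k - 1 - n) := by
        rw [← zpow_sub₀ hp.ne']
        ring_nf
    _ ≤ (p : ℝ) ^ ((m : ℤ) - (n + 1 : ℕ)) :=
        zpow_le_zpow_right₀ one_lt_prime_cast.le (by push_cast; omega)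

end MomentFiltration

theorem stmt18_general (p k : ℕ) [Fact p.Prime]
    (Φ : Matrix (Fin 2) (Fin 2) ℚ_[p] → ℕ → ℚ_[p])
    -- Φ takes values in D_k(ℤ_p):
    (hint : ∀ g i, ‖Φ g i‖ ≤ 1)
    -- U_p Φ = p^{k/2} Φ, written out on moments:
    (heig : ∀ g i, (p : ℚ_[p]) ^ (k / 2) * Φ g i =
      ∑ j ∈ Finset.range p, ∑ ν ∈ Finset.range (i + 1),
        (i.choose ν : ℚ_[p]) * (p : ℚ_[p]) ^ ν * (j : ℚ_[p]) ^ (i - ν)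
          * Φ (g * alphaMat18 p j) ν)
    -- Φ lies in the kernel of the specialization map ρ:
    (hlow : ∀ g, ∀ i ≤ k, Φ g i = 0) :
    ∀ g i, Φ g i = 0 := by
  have hfil : ∀ n g, MomentFiltration.MemFiltration k n (Φ g) := by
    intro n
    induction n with
    | zero => exact fun g => MomentFiltration.memFiltration_zero (hlow g) (hint g)
    | succ n ih =>
        exact fun g => MomentFiltration.memFiltration_succ_of_eq_sum (Nat.div_le_self k 2)
          (hlow g) (fun j => ih (g * alphaMat18 p j)) (heig g)
  exact fun g => MomentFiltration.eq_zero_of_forall_memFiltration fun n => hfil n g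

/-- injectivity of the specialization map on the `p^{k/2}`-eigenspace of
`U_p`.  A rigid-analytic automorphic form `Φ ∈ A_k(Γ, ℤ_p)` is encoded by its moment
functions `Φ g i = Φ(g)(x^i) ∈ ℤ_p`; the `U_p`-eigenvalue equation reads, via the explicit
moment formula for `U_p`,
`p^{k/2} Φ(g)(x^i) = ∑_{j<p} ∑_{ν≤i} C(i,ν) p^ν j^{i-ν} Φ(gα_j)(x^ν)`.
If moreover all moments `Φ(g)(x^i)` with `i ≤ k` vanish (i.e. `Φ ∈ ker ρ`), then `Φ = 0`. -/
theorem stmt18 (p k : ℕ) [Fact p.Prime] (hk : Even k)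
    (Γ : Set (Matrix (Fin 2) (Fin 2) ℚ_[p])) (hΓ : ∀ γ ∈ Γ, γ.det = 1)
    (Φ : Matrix (Fin 2) (Fin 2) ℚ_[p] → ℕ → ℚ_[p])
    -- Φ takes values in D_k(ℤ_p):
    (hint : ∀ g i, ‖Φ g i‖ ≤ 1)
    -- left ℚ_p^× Γ-invariance:
    (hinv : ∀ (u : ℚ_[p]) (γ g : Matrix (Fin 2) (Fin 2) ℚ_[p]),
      u ≠ 0 → γ ∈ Γ → Φ (u • (γ * g)) = Φ g)
    -- U_p Φ = p^{k/2} Φ, written out on moments: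
    (heig : ∀ g i, (p : ℚ_[p]) ^ (k / 2) * Φ g i =
      ∑ j ∈ Finset.range p, ∑ ν ∈ Finset.range (i + 1),
        (i.choose ν : ℚ_[p]) * (p : ℚ_[p]) ^ ν * (j : ℚ_[p]) ^ (i - ν)
          * Φ (g * alphaMat18 p j) ν)
    -- Φ lies in the kernel of the specialization map ρ:
    (hlow : ∀ g, ∀ i ≤ k, Φ g i = 0) :
    ∀ g i, Φ g i = 0 :=
  stmt18_general p k Φ hint heig hlow
end
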